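/- arXiv:2002.04010 — 4 statements merged into one kernel-verified Lean document; each statement's English description precedes it below -/
import Mathlib

section
/- Gronwall-type coupling bound (core of Steps 1–3 of the proof of the main theorem): Let C₀, K, R₀, c, ε, t₀ > 0. Suppose σ is continuously differentiable and the trajectories W_t (full training) and W^{(k)}_t (Taylorized training) satisfy, for all t ∈ [0, t₀]: (i) ‖W_t − W₀‖_F ≤ C₀ and ‖W^{(k)}_t − W₀‖_F ≤ C₀; (ii) ‖J(W)‖_F ≤ K and ‖J^{(k)}(W)‖_F ≤ K for all W with ‖W − W₀‖_F ≤ C₀, and both J and J^{(k)} are K-Lipschitz in Frobenius norm on this ball; (iii) ‖g_t‖ ≤ R₀ e^{−ct} and ‖g^{(k)}_t‖ ≤ R₀ e^{−ct}; (iv) ‖J(W_t) − J^{(k)}(W_t)‖_F ≤ ε. Then there exist constants a, b > 0 depending only on (η₀, K, R₀) such that for all t ∈ [0, t₀]: ‖W_t − W^{(k)}_t‖_F + ‖g_t − g^{(k)}_t‖ ≤ a · ε · e^{bt}. -/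
open scoped BigOperators RealInnerProductSpace
noncomputable section

/-- Weight space: `m` neurons, each in `ℝ^d`, with the Frobenius (ℓ²-of-ℓ²) norm. -/
abbrev Wts (d m : ℕ) : Type := PiLp 2 (fun _ : Fin m => EuclideanSpace ℝ (Fin d))

/-- Two-layer network `f_W(x) = m^{-1/2} ∑_r a_r σ(⟨w_r, x⟩)`. -/
def net (d m : ℕ) (σ : ℝ → ℝ) (a : Fin m → ℝ) (W : Wts d m)
    (x : EuclideanSpace ℝ (Fin d)) : ℝ :=
  (Real.sqrt m)⁻¹ * ∑ r : Fin m, a r * σ ⟪W r, x⟫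

/-- The `k`-th order Taylorized model of the network around `W₀`. -/
def netT (d m k : ℕ) (σ : ℝ → ℝ) (a : Fin m → ℝ) (W₀ : Wts d m) (W : Wts d m)
    (x : EuclideanSpace ℝ (Fin d)) : ℝ :=
  (Real.sqrt m)⁻¹ * ∑ r : Fin m, a r *
    ∑ j ∈ Finset.range (k + 1),
      (iteratedDeriv j σ ⟪W₀ r, x⟫ / (j.factorial : ℝ)) * ⟪W r - W₀ r, x⟫ ^ j

/-- Residual vector `g(W) ∈ ℝⁿ`, `g(W)ᵢ = f_W(xᵢ) - yᵢ`. -/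
def resid (d m n : ℕ) (σ : ℝ → ℝ) (a : Fin m → ℝ)
    (X : Fin n → EuclideanSpace ℝ (Fin d)) (y : EuclideanSpace ℝ (Fin n))
    (W : Wts d m) : EuclideanSpace ℝ (Fin n) :=
  WithLp.toLp 2 (fun i => net d m σ a W (X i) - y i)

/-- Residual vector `g⁽ᵏ⁾(W) ∈ ℝⁿ` of the Taylorized model. -/
def residT (d m n k : ℕ) (σ : ℝ → ℝ) (a : Fin m → ℝ) (W₀ : Wts d m)
    (X : Fin n → EuclideanSpace ℝ (Fin d)) (y : EuclideanSpace ℝ (Fin n))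
    (W : Wts d m) : EuclideanSpace ℝ (Fin n) :=
  WithLp.toLp 2 (fun i => netT d m k σ a W₀ W (X i) - y i)

/-- Squared loss `L(W) = ½‖g(W)‖²`. -/
def loss (d m n : ℕ) (σ : ℝ → ℝ) (a : Fin m → ℝ)
    (X : Fin n → EuclideanSpace ℝ (Fin d)) (y : EuclideanSpace ℝ (Fin n))
    (W : Wts d m) : ℝ :=
  (1 / 2) * ‖resid d m n σ a X y W‖ ^ 2

/-- Squared loss `L⁽ᵏ⁾(W) = ½‖g⁽ᵏ⁾(W)‖²` of the Taylorized model. -/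
def lossT (d m n k : ℕ) (σ : ℝ → ℝ) (a : Fin m → ℝ) (W₀ : Wts d m)
    (X : Fin n → EuclideanSpace ℝ (Fin d)) (y : EuclideanSpace ℝ (Fin n))
    (W : Wts d m) : ℝ :=
  (1 / 2) * ‖residT d m n k σ a W₀ X y W‖ ^ 2

/-- `i`-th row of the Jacobian `J(W)`: the gradient of `W ↦ f_W(xᵢ)`.
Its `r`-th block `Jrow ... W i r` is the gradient `∇_{w_r} f_W(xᵢ)`. -/
def Jrow (d m n : ℕ) (σ : ℝ → ℝ) (a : Fin m → ℝ)
    (X : Fin n → EuclideanSpace ℝ (Fin d)) (W : Wts d m) (i : Fin n) : Wts d m :=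
  gradient (fun V => net d m σ a V (X i)) W

/-- `i`-th row of the Taylorized Jacobian `J⁽ᵏ⁾(W)`. -/
def JrowT (d m n k : ℕ) (σ : ℝ → ℝ) (a : Fin m → ℝ) (W₀ : Wts d m)
    (X : Fin n → EuclideanSpace ℝ (Fin d)) (W : Wts d m) (i : Fin n) : Wts d m :=
  gradient (fun V => netT d m k σ a W₀ V (X i)) W

/-!
Full and Taylorized training move the pair `(W, g(W))` with velocity `(v, J v)`, `v = -η₀ Jᵀ g`,
for their respective Jacobians `J`. Along the two trajectories, the difference of these velocities
is bounded by `C (ε + ‖Δ‖)` with `Δ = (W_t - W⁽ᵏ⁾_t, g_t - g⁽ᵏ⁾_t)` and `C = 2η₀(1 + K)²(1 + R₀)`: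
split `J(W_t) - J⁽ᵏ⁾(W⁽ᵏ⁾_t)` into the mismatch `J(W_t) - J⁽ᵏ⁾(W_t)` (at most `ε`) and a Lipschitz
increment of `J⁽ᵏ⁾` (at most `K ‖W_t - W⁽ᵏ⁾_t‖`), and use `‖g_t‖ ≤ R₀`. Since `Δ 0 = 0`, Grönwall's
inequality gives `‖Δ t‖ ≤ ε (e^{Ct} - 1)`.
-/

section Jacobian

open Real

variable {E : Type*} [NormedAddCommGroup E] {n : ℕ}

def frobNorm (J : Fin n → E) : ℝ := √(∑ i, ‖J i‖ ^ 2)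

lemma frobNorm_eq_norm_toLp (J : Fin n → E) :
    frobNorm J = ‖(WithLp.toLp 2 J : PiLp 2 fun _ : Fin n => E)‖ :=
  (PiLp.norm_eq_of_L2 _).symm

lemma frobNorm_nonneg (J : Fin n → E) : 0 ≤ frobNorm J := sqrt_nonneg _

lemma frobNorm_add_le (J J' : Fin n → E) : frobNorm (J + J') ≤ frobNorm J + frobNorm J' := by
  simp only [frobNorm_eq_norm_toLp]
  exact norm_add_le _ _

variable [InnerProductSpace ℝ E]

/- A family `J : Fin n → E` stands for the matrix with rows `J i`: `jvp J v = J v` and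
`vjp J g = Jᵀ g`. -/
def jvp (J : Fin n → E) : E →L[ℝ] EuclideanSpace ℝ (Fin n) :=
  (PiLp.continuousLinearEquiv 2 ℝ _).symm.toContinuousLinearMap ∘L
    ContinuousLinearMap.pi fun i => innerSL ℝ (J i)

@[simp]
lemma jvp_apply (J : Fin n → E) (v : E) (i : Fin n) : jvp J v i = ⟪J i, v⟫ := rfl

def vjp (J : Fin n → E) (g : EuclideanSpace ℝ (Fin n)) : E := ∑ i, g i • J i

lemma norm_vjp_le (J : Fin n → E) (g : EuclideanSpace ℝ (Fin n)) :
    ‖vjp J g‖ ≤ frobNorm J * ‖g‖ :=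
  calc ‖vjp J g‖ ≤ ∑ i, ‖g i‖ * ‖J i‖ := by
        simpa only [vjp, norm_smul] using norm_sum_le _ fun i => g i • J i
    _ ≤ √(∑ i, ‖g i‖ ^ 2) * frobNorm J := sum_mul_le_sqrt_mul_sqrt _ _ _
    _ = frobNorm J * ‖g‖ := by rw [EuclideanSpace.norm_eq, mul_comm]

lemma norm_jvp_le (J : Fin n → E) (v : E) : ‖jvp J v‖ ≤ frobNorm J * ‖v‖ := by
  rw [EuclideanSpace.norm_eq, frobNorm, ← sqrt_sq (norm_nonneg v), ← sqrt_mul (by positivity),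
    Finset.sum_mul]
  refine sqrt_le_sqrt (Finset.sum_le_sum fun i _ => ?_)
  rw [← mul_pow]
  exact pow_le_pow_left₀ (norm_nonneg _) (norm_inner_le_norm _ _) 2

lemma vjp_sub_vjp (J J' : Fin n → E) (g h : EuclideanSpace ℝ (Fin n)) :
    vjp J g - vjp J' h = vjp (J - J') g + vjp J' (g - h) := by
  simp only [vjp, ← Finset.sum_sub_distrib, ← Finset.sum_add_distrib]
  refine Finset.sum_congr rfl fun i _ => ?_
  simp only [Pi.sub_apply, PiLp.sub_apply, smul_sub, sub_smul]
  abel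

lemma jvp_sub_jvp (J J' : Fin n → E) (v v' : E) :
    jvp J v - jvp J' v' = jvp (J - J') v + jvp J' (v - v') := by
  ext i
  simp only [PiLp.sub_apply, PiLp.add_apply, jvp_apply, Pi.sub_apply, inner_sub_left,
    inner_sub_right]
  ring

lemma norm_vjp_sub_vjp_le (J J' : Fin n → E) (g h : EuclideanSpace ℝ (Fin n)) :
    ‖vjp J g - vjp J' h‖ ≤ frobNorm (J - J') * ‖g‖ + frobNorm J' * ‖g - h‖ := by
  rw [vjp_sub_vjp]
  exact (norm_add_le _ _).trans (add_le_add (norm_vjp_le _ _) (norm_vjp_le _ _))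

lemma norm_jvp_sub_jvp_le (J J' : Fin n → E) (v v' : E) :
    ‖jvp J v - jvp J' v'‖ ≤ frobNorm (J - J') * ‖v‖ + frobNorm J' * ‖v - v'‖ := by
  rw [jvp_sub_jvp]
  exact (norm_add_le _ _).trans (add_le_add (norm_jvp_le _ _) (norm_jvp_le _ _))

variable [CompleteSpace E] {g : E → EuclideanSpace ℝ (Fin n)} {J : E → Fin n → E}

lemma hasFDerivAt_euclidean_of_hasGradientAt {V : E} {J₀ : Fin n → E}
    (hg : ∀ i, HasGradientAt (fun U => g U i) (J₀ i) V) : HasFDerivAt g (jvp J₀) V := by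
  rw [← hasFDerivWithinAt_univ, hasFDerivWithinAt_euclidean]
  intro i
  rw [hasFDerivWithinAt_univ]
  exact (hg i).hasFDerivAt.congr_fderiv (by ext; simp)

lemma hasDerivAt_comp_of_hasGradientAt (hg : ∀ V i, HasGradientAt (fun U => g U i) (J V i) V)
    {W : ℝ → E} {W' : E} {t : ℝ} (hW : HasDerivAt W W' t) :
    HasDerivAt (fun s => g (W s)) (jvp (J (W t)) W') t :=
  (hasFDerivAt_euclidean_of_hasGradientAt (hg (W t))).comp_hasDerivAt t hW

lemma hasGradientAt_half_norm_sq_comp (hg : ∀ V i, HasGradientAt (fun U => g U i) (J V i) V)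
    (V : E) : HasGradientAt (fun U => 1 / 2 * ‖g U‖ ^ 2) (vjp (J V) (g V)) V := by
  have hg' := hasFDerivAt_euclidean_of_hasGradientAt (hg V)
  refine (hg'.norm_sq.const_mul (1 / 2)).congr_fderiv ?_
  ext u
  simp [vjp, PiLp.inner_apply, mul_comm]

end Jacobian

section GradientFlow

open Real Set

lemma norm_le_mul_exp_sub_one_of_norm_deriv_le {F : Type*} [NormedAddCommGroup F]
    [NormedSpace ℝ F] {f f' : ℝ → F} {C ε t₀ : ℝ} (hf : ∀ s, HasDerivAt f (f' s) s)
    (h0 : f 0 = 0) (bound : ∀ s ∈ Ico 0 t₀, ‖f' s‖ ≤ C * (ε + ‖f s‖)) :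
    ∀ t ∈ Icc 0 t₀, ‖f t‖ ≤ ε * (exp (C * t) - 1) := by
  intro t ht
  have hgron := norm_le_gronwallBound_of_norm_deriv_right_le (δ := 0) (K := C) (ε := C * ε)
    (fun s _ => (hf s).continuousAt.continuousWithinAt) (fun s _ => (hf s).hasDerivWithinAt)
    (by simp [h0]) (fun s hs => (bound s hs).trans_eq (by ring)) t ht
  rcases eq_or_ne C 0 with rfl | hC
  · simpa [gronwallBound_K0] using hgron
  · simpa only [gronwallBound_of_K_ne_0 hC, sub_zero, zero_mul, zero_add,
      mul_div_cancel_left₀ _ hC] using hgron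

variable {E : Type*} [NormedAddCommGroup E] [InnerProductSpace ℝ E] {n : ℕ}

lemma norm_flow_velocity_sub_le {η K R₀ ε : ℝ} (hη : 0 ≤ η) (hK : 0 ≤ K) (hε : 0 ≤ ε)
    {g h : EuclideanSpace ℝ (Fin n)} {J J' : Fin n → E} (δ : E) (hg : ‖g‖ ≤ R₀)
    (hJ : frobNorm J ≤ K) (hJ' : frobNorm J' ≤ K) (hJJ' : frobNorm (J - J') ≤ ε + K * ‖δ‖) :
    ‖(-(η • vjp J g) - -(η • vjp J' h), jvp J (-(η • vjp J g)) - jvp J' (-(η • vjp J' h)))‖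
      ≤ 2 * η * (1 + K) ^ 2 * (1 + R₀) * (ε + ‖(δ, g - h)‖) := by
  set x := ‖(δ, g - h)‖
  have hδ : ‖δ‖ ≤ x := norm_fst_le (δ, g - h)
  have hgh : ‖g - h‖ ≤ x := norm_snd_le (δ, g - h)
  have hR₀ : 0 ≤ R₀ := (norm_nonneg g).trans hg
  have hJJ'x : frobNorm (J - J') ≤ (1 + K) * (ε + x) := by
    nlinarith [mul_le_mul_of_nonneg_left hδ hK, mul_nonneg hK hε, norm_nonneg (δ, g - h)]
  have hP : ‖η • vjp J g‖ ≤ η * (K * R₀) := by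
    rw [norm_smul, Real.norm_of_nonneg hη]
    gcongr
    exact (norm_vjp_le J g).trans (mul_le_mul hJ hg (norm_nonneg g) hK)
  have hPQ : ‖η • vjp J g - η • vjp J' h‖ ≤ η * ((1 + K) * (1 + R₀) * (ε + x)) := by
    rw [← smul_sub, norm_smul, Real.norm_of_nonneg hη]
    gcongr
    calc ‖vjp J g - vjp J' h‖ ≤ frobNorm (J - J') * ‖g‖ + frobNorm J' * ‖g - h‖ :=
          norm_vjp_sub_vjp_le J J' g h
      _ ≤ (1 + K) * (ε + x) * R₀ + K * x := by
          gcongr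
      _ ≤ (1 + K) * (1 + R₀) * (ε + x) := by nlinarith [norm_nonneg (δ, g - h)]
  have hy : 0 ≤ η * (1 + K) * (ε + x) := by positivity
  rw [norm_prod_le_iff, neg_sub_neg, norm_sub_rev]
  constructor
  · calc ‖η • vjp J g - η • vjp J' h‖ ≤ η * (1 + K) * (ε + x) * (1 + R₀) :=
          hPQ.trans_eq (by ring)
      _ ≤ η * (1 + K) * (ε + x) * (2 * (1 + K) * (1 + R₀)) := by gcongr; nlinarith
      _ = _ := by ring
  · calc ‖jvp J (-(η • vjp J g)) - jvp J' (-(η • vjp J' h))‖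
          ≤ frobNorm (J - J') * ‖η • vjp J g‖ + frobNorm J' * ‖η • vjp J g - η • vjp J' h‖ := by
            simpa only [norm_neg, neg_sub_neg, norm_sub_rev] using
              norm_jvp_sub_jvp_le J J' (-(η • vjp J g)) (-(η • vjp J' h))
      _ ≤ (1 + K) * (ε + x) * (η * (K * R₀)) + K * (η * ((1 + K) * (1 + R₀) * (ε + x))) := by
          gcongr
      _ = η * (1 + K) * (ε + x) * (K * R₀ + K * (1 + R₀)) := by ring
      _ ≤ η * (1 + K) * (ε + x) * (2 * (1 + K) * (1 + R₀)) := by gcongr; nlinarith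
      _ = _ := by ring

variable [CompleteSpace E]

theorem norm_sub_add_norm_sub_le_of_gradient_flows {η K R₀ ε t₀ : ℝ} (hη : 0 ≤ η) (hK : 0 ≤ K)
    (hε : 0 ≤ ε) {g gT : E → EuclideanSpace ℝ (Fin n)} {J JT : E → Fin n → E} {W Wk : ℝ → E}
    (hg : ∀ V i, HasGradientAt (fun U => g U i) (J V i) V)
    (hgT : ∀ V i, HasGradientAt (fun U => gT U i) (JT V i) V)
    (hW : ∀ s, HasDerivAt W (-(η • vjp (J (W s)) (g (W s)))) s)
    (hWk : ∀ s, HasDerivAt Wk (-(η • vjp (JT (Wk s)) (gT (Wk s)))) s)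
    (hW0 : W 0 = Wk 0) (hg0 : g (W 0) = gT (Wk 0))
    (hgR₀ : ∀ s ∈ Icc 0 t₀, ‖g (W s)‖ ≤ R₀)
    (hJ : ∀ s ∈ Icc 0 t₀, frobNorm (J (W s)) ≤ K)
    (hJT : ∀ s ∈ Icc 0 t₀, frobNorm (JT (Wk s)) ≤ K)
    (hJT_lip : ∀ s ∈ Icc 0 t₀, frobNorm (JT (W s) - JT (Wk s)) ≤ K * ‖W s - Wk s‖)
    (hJ_JT : ∀ s ∈ Icc 0 t₀, frobNorm (J (W s) - JT (W s)) ≤ ε) :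
    ∀ t ∈ Icc 0 t₀, ‖W t - Wk t‖ + ‖g (W t) - gT (Wk t)‖
      ≤ 2 * ε * exp (2 * η * (1 + K) ^ 2 * (1 + R₀) * t) := by
  have hf : ∀ s, HasDerivAt (fun s => (W s - Wk s, g (W s) - gT (Wk s)))
      (-(η • vjp (J (W s)) (g (W s))) - -(η • vjp (JT (Wk s)) (gT (Wk s))),
        jvp (J (W s)) (-(η • vjp (J (W s)) (g (W s))))
          - jvp (JT (Wk s)) (-(η • vjp (JT (Wk s)) (gT (Wk s))))) s := fun s =>
    ((hW s).sub (hWk s)).prodMk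
      ((hasDerivAt_comp_of_hasGradientAt hg (hW s)).sub
        (hasDerivAt_comp_of_hasGradientAt hgT (hWk s)))
  have hJ_JT' : ∀ s ∈ Icc 0 t₀, frobNorm (J (W s) - JT (Wk s)) ≤ ε + K * ‖W s - Wk s‖ :=
    fun s hs => by
      simpa only [sub_add_sub_cancel] using
        (frobNorm_add_le _ _).trans (add_le_add (hJ_JT s hs) (hJT_lip s hs))
  have hpair := norm_le_mul_exp_sub_one_of_norm_deriv_le hf
    (Prod.ext (sub_eq_zero.2 hW0) (sub_eq_zero.2 hg0)) fun s hs =>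
    norm_flow_velocity_sub_le hη hK hε _ (hgR₀ s (Ico_subset_Icc_self hs))
      (hJ s (Ico_subset_Icc_self hs)) (hJT s (Ico_subset_Icc_self hs))
      (hJ_JT' s (Ico_subset_Icc_self hs))
  intro t ht
  calc ‖W t - Wk t‖ + ‖g (W t) - gT (Wk t)‖
      ≤ 2 * ‖(W t - Wk t, g (W t) - gT (Wk t))‖ := by
        linarith [norm_fst_le (W t - Wk t, g (W t) - gT (Wk t)),
          norm_snd_le (W t - Wk t, g (W t) - gT (Wk t))]
    _ ≤ 2 * ε * exp (2 * η * (1 + K) ^ 2 * (1 + R₀) * t) := by linarith [hpair t ht]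

end GradientFlow

section Network

variable {d m n k : ℕ} {σ : ℝ → ℝ} (a : Fin m → ℝ) (W₀ : Wts d m)
  (X : Fin n → EuclideanSpace ℝ (Fin d)) (y : EuclideanSpace ℝ (Fin n))

lemma differentiable_net (hσ : Differentiable ℝ σ) (x : EuclideanSpace ℝ (Fin d)) :
    Differentiable ℝ fun V => net d m σ a V x := by
  have hinner (r : Fin m) : Differentiable ℝ fun V : Wts d m => ⟪V r, x⟫ :=
    (PiLp.proj 2 _ r).differentiable.inner ℝ (differentiable_const x)
  unfold net
  fun_prop

lemma differentiable_netT (x : EuclideanSpace ℝ (Fin d)) :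
    Differentiable ℝ fun V => netT d m k σ a W₀ V x := by
  have hinner (r : Fin m) : Differentiable ℝ fun V : Wts d m => ⟪V r - W₀ r, x⟫ :=
    ((PiLp.proj 2 _ r).differentiable.sub_const (W₀ r)).inner ℝ (differentiable_const x)
  unfold netT
  fun_prop

lemma netT_self (x : EuclideanSpace ℝ (Fin d)) : netT d m k σ a W₀ W₀ x = net d m σ a W₀ x := by
  unfold netT net
  congr! with r
  rw [Finset.sum_eq_single_of_mem 0 (by simp) fun j _ hj => by simp [zero_pow hj]]
  simp

lemma residT_self : residT d m n k σ a W₀ X y W₀ = resid d m n σ a X y W₀ := by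
  ext i
  exact congrArg (· - y i) (netT_self a W₀ (X i))

lemma hasGradientAt_resid (hσ : Differentiable ℝ σ) (V : Wts d m) (i : Fin n) :
    HasGradientAt (fun U => resid d m n σ a X y U i) (Jrow d m n σ a X V i) V :=
  hasGradientAt_iff_hasFDerivAt.2
    ((differentiable_net a hσ (X i) V).hasGradientAt.hasFDerivAt.sub_const (y i))

lemma hasGradientAt_residT (V : Wts d m) (i : Fin n) :
    HasGradientAt (fun U => residT d m n k σ a W₀ X y U i) (JrowT d m n k σ a W₀ X V i) V :=
  hasGradientAt_iff_hasFDerivAt.2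
    ((differentiable_netT a W₀ (X i) V).hasGradientAt.hasFDerivAt.sub_const (y i))

lemma gradient_loss (hσ : Differentiable ℝ σ) (V : Wts d m) :
    gradient (loss d m n σ a X y) V = vjp (Jrow d m n σ a X V) (resid d m n σ a X y V) :=
  (hasGradientAt_half_norm_sq_comp (hasGradientAt_resid a X y hσ) V).gradient

lemma gradient_lossT (V : Wts d m) :
    gradient (lossT d m n k σ a W₀ X y) V
      = vjp (JrowT d m n k σ a W₀ X V) (residT d m n k σ a W₀ X y V) :=
  (hasGradientAt_half_norm_sq_comp (hasGradientAt_residT a W₀ X y) V).gradient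

end Network

set_option maxHeartbeats 4000000 in
set_option synthInstance.maxHeartbeats 400000 in
/-- Gronwall-type coupling bound (Steps 1–3 of the proof of the main theorem). -/
theorem gronwall_coupling
    (η₀ K R₀ : ℝ) (hη₀ : 0 < η₀) (hK : 0 < K) (hR₀ : 0 < R₀) :
    ∃ a b : ℝ, 0 < a ∧ 0 < b ∧
      ∀ (d m n k : ℕ) (σ : ℝ → ℝ), ContDiff ℝ 1 σ →
      ∀ sgn : Fin m → ℝ, (∀ r, sgn r = 1 ∨ sgn r = -1) →
      ∀ (W₀ : Wts d m) (X : Fin n → EuclideanSpace ℝ (Fin d)),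
        (∀ i, ‖X i‖ = 1) →
      ∀ y : EuclideanSpace ℝ (Fin n),
      ∀ C₀ c ε t₀ : ℝ, 0 < C₀ → 0 < c → 0 < ε → 0 < t₀ →
      ∀ W Wk : ℝ → Wts d m,
        W 0 = W₀ → Wk 0 = W₀ →
        (∀ t : ℝ, HasDerivAt W (-(η₀ • gradient (loss d m n σ sgn X y) (W t))) t) →
        (∀ t : ℝ, HasDerivAt Wk (-(η₀ • gradient (lossT d m n k σ sgn W₀ X y) (Wk t))) t) →
        -- (i) both trajectories stay in the ball of radius C₀ around W₀
        (∀ t ∈ Set.Icc (0 : ℝ) t₀, ‖W t - W₀‖ ≤ C₀ ∧ ‖Wk t - W₀‖ ≤ C₀) →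
        -- (ii) boundedness of both Jacobians on the ball ...
        (∀ V : Wts d m, ‖V - W₀‖ ≤ C₀ →
          Real.sqrt (∑ i, ‖Jrow d m n σ sgn X V i‖ ^ 2) ≤ K ∧
          Real.sqrt (∑ i, ‖JrowT d m n k σ sgn W₀ X V i‖ ^ 2) ≤ K) →
        -- ... and K-Lipschitzness of both Jacobians on the ball
        (∀ V V' : Wts d m, ‖V - W₀‖ ≤ C₀ → ‖V' - W₀‖ ≤ C₀ →
          Real.sqrt (∑ i, ‖Jrow d m n σ sgn X V i - Jrow d m n σ sgn X V' i‖ ^ 2)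
            ≤ K * ‖V - V'‖ ∧
          Real.sqrt (∑ i, ‖JrowT d m n k σ sgn W₀ X V i - JrowT d m n k σ sgn W₀ X V' i‖ ^ 2)
            ≤ K * ‖V - V'‖) →
        -- (iii) exponential decay of both residuals
        (∀ t ∈ Set.Icc (0 : ℝ) t₀,
          ‖resid d m n σ sgn X y (W t)‖ ≤ R₀ * Real.exp (-(c * t)) ∧
          ‖residT d m n k σ sgn W₀ X y (Wk t)‖ ≤ R₀ * Real.exp (-(c * t))) →
        -- (iv) Jacobian difference bound along the full-training trajectory
        (∀ t ∈ Set.Icc (0 : ℝ) t₀,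
          Real.sqrt (∑ i, ‖Jrow d m n σ sgn X (W t) i - JrowT d m n k σ sgn W₀ X (W t) i‖ ^ 2)
            ≤ ε) →
      ∀ t ∈ Set.Icc (0 : ℝ) t₀,
        ‖W t - Wk t‖ + ‖resid d m n σ sgn X y (W t) - residT d m n k σ sgn W₀ X y (Wk t)‖
          ≤ a * ε * Real.exp (b * t) := by
  refine ⟨2, 2 * η₀ * (1 + K) ^ 2 * (1 + R₀), two_pos, by positivity, ?_⟩
  intro d m n k σ hσ sgn _ W₀ X _ y C₀ c ε t₀ _ hc hε _ W Wk hW0 hWk0 hW hWk hball hJ hJ_lip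
    hdecay hJ_JT
  have hσ' : Differentiable ℝ σ := hσ.differentiable one_ne_zero
  refine norm_sub_add_norm_sub_le_of_gradient_flows hη₀.le hK.le hε.le
    (hasGradientAt_resid sgn X y hσ') (hasGradientAt_residT sgn W₀ X y)
    (fun s => gradient_loss sgn X y hσ' (W s) ▸ hW s)
    (fun s => gradient_lossT sgn W₀ X y (Wk s) ▸ hWk s)
    (hW0.trans hWk0.symm) (by rw [hW0, hWk0, residT_self]) (fun s hs => ?_)
    (fun s hs => (hJ _ (hball s hs).1).1) (fun s hs => (hJ _ (hball s hs).2).2)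
    (fun s hs => (hJ_lip _ _ (hball s hs).1 (hball s hs).2).2) hJ_JT
  have hexp : Real.exp (-(c * s)) ≤ 1 := Real.exp_le_one_iff.2 (neg_nonpos.2 (by nlinarith [hs.1]))
  exact (hdecay s hs).1.trans (mul_le_of_le_one_right hR₀.le hexp)
end
end

section
/- Boundedness of gradient flow for full training (deterministic form of Lemma A.1(b)): Assume |σ'(t)| ≤ C₁ for all t, σ' is C₁-Lipschitz, and ‖x_i‖ = 1 for all i; set K = C₁√n. Assume ⟨v, Θ̂(W₀) v⟩ ≥ λ‖v‖² for all v ∈ ℝⁿ for some λ > 0, ‖g(W₀)‖ ≤ R₀, and m ≥ (9 K³ R₀ / λ²)². Then any solution W_t of the full-training gradient flow satisfies, for all t ≥ 0: (a) ‖g_t‖ ≤ e^{−η₀ λ t / 3} R₀; (b) ‖W_t − W₀‖_F ≤ (3 K R₀ / λ)(1 − e^{−η₀ λ t / 3}); and (c) ⟨v, Θ̂(W_t) v⟩ ≥ (λ/3)‖v‖² for all v ∈ ℝⁿ. -/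
open scoped BigOperators RealInnerProductSpace
noncomputable section

set_option synthInstance.maxHeartbeats 400000
set_option maxHeartbeats 1000000

/-!
The gradient of the loss is `J(W)ᵀ g(W)`, so along the flow `d/dt ‖g‖² = -2η₀ ‖J(W)ᵀ g‖²` and
`‖Ẇ‖ ≤ η₀ K ‖g‖` with `K = C₁ √n`. As long as the NTK stays above `λ/3`, Grönwall makes `‖g_t‖`
decay like `e^{-η₀λt/3}`, and integrating `‖Ẇ‖` keeps `W_t` within `3KR₀/λ` of `W₀`. Conversely
`W ↦ J(W)ᵀ` is `K m^{-1/2}`-Lipschitz, so by the width assumption (together with `λ ≤ K²`, read off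
the NTK at `W₀`) the NTK stays above `(3/5)² λ ≥ λ/3` on that ball. A continuous induction on
`K m^{-1/2} ‖W_t - W₀‖ < (2/5) √λ` closes the loop: the ball only forces `≤ √λ/3`, and the slack
between `1/3` and `2/5` makes the induction strict even when `R₀ = 0`.
-/

open Set Real

theorem forall_ge_lt_of_forall_Ico_le_imp_lt {φ : ℝ → ℝ} (hφ : Continuous φ) {ρ : ℝ}
    (h : ∀ T ≥ 0, (∀ t ∈ Ico 0 T, φ t ≤ ρ) → φ T < ρ) : ∀ t ≥ 0, φ t < ρ := by
  intro t₁ ht₁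
  by_contra! hbad
  have hS : IsCompact (Icc 0 t₁ ∩ {t | ρ ≤ φ t}) :=
    isCompact_Icc.inter_right (isClosed_le continuous_const hφ)
  obtain ⟨T, ⟨hT, hρT⟩, hTmin⟩ := hS.exists_isLeast ⟨t₁, ⟨ht₁, le_rfl⟩, hbad⟩
  refine (h T hT.1 fun t ht => ?_).not_ge hρT
  by_contra! hρt
  exact (hTmin ⟨⟨ht.1, ht.2.le.trans hT.2⟩, hρt.le⟩).not_gt ht.2

theorem le_mul_exp_of_hasDerivAt_le_neg_mul {f f' : ℝ → ℝ} {κ T : ℝ}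
    (hf : ∀ t, HasDerivAt f (f' t) t) (hbound : ∀ t ∈ Ico 0 T, f' t ≤ -κ * f t) :
    ∀ t ∈ Icc 0 T, f t ≤ f 0 * exp (-κ * t) := by
  intro t ht
  have := le_gronwallBound_of_liminf_deriv_right_le (δ := f 0) (K := -κ) (ε := 0)
    (fun s _ => (hf s).continuousAt.continuousWithinAt)
    (fun s _ _ hr => (hf s).hasDerivWithinAt.liminf_right_slope_le hr) le_rfl
    (fun s hs => by simpa using hbound s hs) t ht
  simpa [gronwallBound_ε0] using this

theorem norm_sub_le_of_norm_deriv_le_mul_exp {E : Type*} [NormedAddCommGroup E]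
    [NormedSpace ℝ E] {f f' : ℝ → E} {C κ T : ℝ} (hκ : κ ≠ 0)
    (hf : ∀ t, HasDerivAt f (f' t) t) (hbound : ∀ t ∈ Ico 0 T, ‖f' t‖ ≤ C * exp (-κ * t)) :
    ∀ t ∈ Icc 0 T, ‖f t - f 0‖ ≤ C / κ * (1 - exp (-κ * t)) := by
  refine image_norm_le_of_norm_deriv_right_le_deriv_boundary
    (B := fun t => C / κ * (1 - exp (-κ * t))) (B' := fun t => C * exp (-κ * t))
    (fun t _ => ((hf t).continuousAt.sub continuousAt_const).continuousWithinAt)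
    (fun t _ => ((hf t).sub_const (f 0)).hasDerivWithinAt) (by simp) (fun t => ?_) hbound
  refine ((((hasDerivAt_id' t).const_mul (-κ)).exp.const_sub 1).const_mul (C / κ)).congr_deriv ?_
  field_simp

theorem sum_abs_le_sqrt_card_mul_norm {n : ℕ} (v : EuclideanSpace ℝ (Fin n)) :
    ∑ i, |v i| ≤ √n * ‖v‖ := by
  refine le_of_sq_le_sq ?_ (by positivity)
  rw [mul_pow, sq_sqrt (Nat.cast_nonneg n), EuclideanSpace.real_norm_sq_eq]
  simpa using sq_sum_le_card_mul_sum_sq (s := Finset.univ) (f := fun i => |v i|)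

theorem norm_sum_smul_le {E : Type*} [SeminormedAddCommGroup E] [NormedSpace ℝ E] {n : ℕ}
    (v : EuclideanSpace ℝ (Fin n)) {u : Fin n → E} {c : ℝ} (hc : 0 ≤ c)
    (hu : ∀ i, ‖u i‖ ≤ c) : ‖∑ i, v i • u i‖ ≤ c * √n * ‖v‖ :=
  calc ‖∑ i, v i • u i‖ ≤ ∑ i, ‖v i • u i‖ := norm_sum_le _ _
    _ ≤ ∑ i, c * |v i| := Finset.sum_le_sum fun i _ => by
        rw [norm_smul, Real.norm_eq_abs, mul_comm]
        exact mul_le_mul_of_nonneg_right (hu i) (abs_nonneg _)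
    _ = c * ∑ i, |v i| := (Finset.mul_sum ..).symm
    _ ≤ c * √n * ‖v‖ := by
        rw [mul_assoc]
        exact mul_le_mul_of_nonneg_left (sum_abs_le_sqrt_card_mul_norm v) hc

theorem le_sq_of_lowerBound_le_upperBound {V F : Type*} [NormedAddCommGroup V] [Nontrivial V]
    [NormedAddCommGroup F] {f : V → F} {lam K : ℝ} (hlow : ∀ v, lam * ‖v‖ ^ 2 ≤ ‖f v‖ ^ 2)
    (hup : ∀ v, ‖f v‖ ≤ K * ‖v‖) : lam ≤ K ^ 2 := by
  obtain ⟨v, hv⟩ := exists_ne (0 : V)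
  have hsq := (hlow v).trans (pow_le_pow_left₀ (norm_nonneg _) (hup v) 2)
  rw [mul_pow] at hsq
  exact le_of_mul_le_mul_right hsq (by positivity)

theorem mul_inv_sqrt_mul_le_sqrt_div_three {K R₀ lam M : ℝ} (hlam : 0 < lam) (hR₀ : 0 ≤ R₀)
    (hK : 0 ≤ K) (hKlam : K = 0 ∨ lam ≤ K ^ 2) (hM : (9 * K ^ 3 * R₀ / lam ^ 2) ^ 2 ≤ M) :
    K * (√M)⁻¹ * (3 * K * R₀ / lam) ≤ √lam / 3 := by
  rcases hKlam with rfl | hK2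
  · simp only [zero_mul]; positivity
  rcases (sqrt_nonneg M).eq_or_lt with hM0 | hMpos
  · rw [← hM0]; simp only [inv_zero, mul_zero, zero_mul]; positivity
  have hsl : √lam ≤ K := (sqrt_le_sqrt hK2).trans_eq (sqrt_sq hK)
  have hwidth : 9 * K ^ 3 * R₀ ≤ lam ^ 2 * √M := by
    have := (le_abs_self _).trans (abs_le_sqrt hM)
    rw [div_le_iff₀ (by positivity)] at this
    linarith
  have hls : √lam * √lam = lam := mul_self_sqrt hlam.le
  rw [show K * (√M)⁻¹ * (3 * K * R₀ / lam) = 3 * K ^ 2 * R₀ / (lam * √M) by field_simp,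
    div_le_div_iff₀ (by positivity) (by norm_num)]
  refine le_of_mul_le_mul_right ?_ hlam
  calc 3 * K ^ 2 * R₀ * 3 * lam = 9 * K ^ 2 * R₀ * √lam * √lam := by
        rw [mul_assoc _ √lam, hls]; ring
    _ ≤ 9 * K ^ 2 * R₀ * √lam * K := by gcongr
    _ = √lam * (9 * K ^ 3 * R₀) := by ring
    _ ≤ √lam * (lam ^ 2 * √M) := by gcongr
    _ = √lam * (lam * √M) * lam := by ring

def netGrad (d m : ℕ) (σ : ℝ → ℝ) (a : Fin m → ℝ) (x : EuclideanSpace ℝ (Fin d))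
    (W : Wts d m) : Wts d m :=
  WithLp.toLp 2 (fun r => ((√m)⁻¹ * (a r * deriv σ ⟪W r, x⟫)) • x)

/-- `J(W)ᵀ v = ∑ᵢ vᵢ ∇_W f_W(xᵢ)`. -/
def jacT (d m n : ℕ) (σ : ℝ → ℝ) (a : Fin m → ℝ) (X : Fin n → EuclideanSpace ℝ (Fin d))
    (W : Wts d m) (v : EuclideanSpace ℝ (Fin n)) : Wts d m :=
  ∑ i, v i • netGrad d m σ a (X i) W

def IsGradientFlow (d m n : ℕ) (σ : ℝ → ℝ) (a : Fin m → ℝ)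
    (X : Fin n → EuclideanSpace ℝ (Fin d)) (y : EuclideanSpace ℝ (Fin n)) (η₀ : ℝ)
    (W : ℝ → Wts d m) : Prop :=
  ∀ t, HasDerivAt W (-(η₀ • gradient (loss d m n σ a X y) (W t))) t

section Network

variable {d m n : ℕ} {σ : ℝ → ℝ} {a : Fin m → ℝ} {X : Fin n → EuclideanSpace ℝ (Fin d)}
  {y : EuclideanSpace ℝ (Fin n)} {C₁ : ℝ}

theorem hasGradientAt_net (hσ : Differentiable ℝ σ) (x : EuclideanSpace ℝ (Fin d))
    (W : Wts d m) :
    HasGradientAt (fun V => net d m σ a V x) (netGrad d m σ a x W) W := by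
  rw [hasGradientAt_iff_hasFDerivAt]
  set L : Fin m → Wts d m →L[ℝ] ℝ := fun r => (innerSL ℝ x).comp (PiLp.proj 2 _ r)
  have hL : ∀ r V, L r V = ⟪V r, x⟫ := fun r V => by simp [L, real_inner_comm]
  have hneuron : ∀ r, HasFDerivAt (fun V : Wts d m => a r * σ (L r V))
      (a r • deriv σ (L r W) • L r) W := fun r =>
    ((hσ _).hasDerivAt.comp_hasFDerivAt W (L r).hasFDerivAt).const_mul (a r)
  have hsum := (HasFDerivAt.fun_sum (u := Finset.univ) fun r _ => hneuron r).const_mul (√m)⁻¹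
  simp only [hL] at hsum
  refine hsum.congr_fderiv ?_
  ext V
  rw [InnerProductSpace.toDual_apply_apply, PiLp.inner_apply]
  simp only [smul_apply, FunLike.coe_sum, Finset.sum_apply, hL, netGrad,
    PiLp.toLp_apply, real_inner_smul_left, smul_eq_mul, Finset.mul_sum]
  exact Finset.sum_congr rfl fun r _ => by rw [real_inner_comm (V r) x]; ring

theorem Jrow_eq_netGrad (hσ : Differentiable ℝ σ) (W : Wts d m) (i : Fin n) :
    Jrow d m n σ a X W i = netGrad d m σ a (X i) W :=
  (hasGradientAt_net hσ (X i) W).gradient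

theorem ntk_quadForm_eq_norm_jacT_sq (hσ : Differentiable ℝ σ) (W : Wts d m)
    (v : EuclideanSpace ℝ (Fin n)) :
    ∑ i, ∑ j, v i * ⟪Jrow d m n σ a X W i, Jrow d m n σ a X W j⟫ * v j
      = ‖jacT d m n σ a X W v‖ ^ 2 := by
  simp only [← real_inner_self_eq_norm_sq, jacT, sum_inner, inner_sum, real_inner_smul_left,
    real_inner_smul_right, Jrow_eq_netGrad hσ]
  refine Finset.sum_congr rfl fun i _ => Finset.sum_congr rfl fun j _ => ?_
  rw [real_inner_comm (netGrad d m σ a (X i) W)]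
  ring

theorem hasGradientAt_loss (hσ : Differentiable ℝ σ) (W : Wts d m) :
    HasGradientAt (loss d m n σ a X y) (jacT d m n σ a X W (resid d m n σ a X y W)) W := by
  rw [hasGradientAt_iff_hasFDerivAt]
  have hloss :
      loss d m n σ a X y = fun V => ∑ i, (1 / 2) * (net d m σ a V (X i) - y i) ^ 2 := by
    funext V
    simp [loss, resid, EuclideanSpace.real_norm_sq_eq, Finset.mul_sum]
  have hterm : ∀ i, HasFDerivAt (fun V => (1 / 2) * (net d m σ a V (X i) - y i) ^ 2)
      ((net d m σ a W (X i) - y i) • InnerProductSpace.toDual ℝ _ (netGrad d m σ a (X i) W)) W :=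
    fun i => by
      refine ((((hasGradientAt_net (a := a) hσ (X i) W).hasFDerivAt.sub_const (y i)).pow 2).const_mul
        (1 / 2 : ℝ)).congr_fderiv ?_
      rw [smul_smul]
      congr 1
      norm_num
      ring
  rw [hloss]
  refine (HasFDerivAt.fun_sum (u := Finset.univ) fun i _ => hterm i).congr_fderiv ?_
  simp [jacT, resid]

theorem gradient_loss_eq (hσ : Differentiable ℝ σ) (W : Wts d m) :
    gradient (loss d m n σ a X y) W = jacT d m n σ a X W (resid d m n σ a X y W) :=
  (hasGradientAt_loss hσ W).gradient

theorem netGrad_apply (x : EuclideanSpace ℝ (Fin d)) (W : Wts d m) (r : Fin m) :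
    netGrad d m σ a x W r = ((√m)⁻¹ * (a r * deriv σ ⟪W r, x⟫)) • x :=
  rfl

theorem norm_netGrad_le (hbd : ∀ t, |deriv σ t| ≤ C₁) (ha : ∀ r, |a r| ≤ 1)
    {x : EuclideanSpace ℝ (Fin d)} (hx : ‖x‖ ≤ 1) (W : Wts d m) :
    ‖netGrad d m σ a x W‖ ≤ C₁ := by
  have hC₁ : 0 ≤ C₁ := (abs_nonneg _).trans (hbd 0)
  have hblock : ∀ r, ‖netGrad d m σ a x W r‖ ≤ (√m)⁻¹ * C₁ := fun r => by
    rw [netGrad_apply, norm_smul, norm_mul, norm_mul, norm_inv, norm_of_nonneg (sqrt_nonneg _)]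
    calc (√m)⁻¹ * (‖a r‖ * ‖deriv σ ⟪W r, x⟫‖) * ‖x‖ ≤ (√m)⁻¹ * (1 * C₁) * 1 := by
          gcongr
          exacts [ha r, hbd _]
      _ = (√m)⁻¹ * C₁ := by ring
  rw [PiLp.norm_eq_of_L2, sqrt_le_left hC₁]
  calc ∑ r, ‖netGrad d m σ a x W r‖ ^ 2 ≤ ∑ _r : Fin m, ((√m)⁻¹ * C₁) ^ 2 :=
        Finset.sum_le_sum fun r _ => pow_le_pow_left₀ (norm_nonneg _) (hblock r) 2
    _ = (√m * (√m)⁻¹) ^ 2 * C₁ ^ 2 := by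
        rw [Finset.sum_const, Finset.card_univ, Fintype.card_fin, nsmul_eq_mul, mul_pow (√m),
          sq_sqrt (Nat.cast_nonneg m)]
        ring
    _ ≤ C₁ ^ 2 := mul_le_of_le_one_left (sq_nonneg C₁) (pow_le_one₀ (by positivity) mul_inv_le_one)

theorem norm_netGrad_sub_le (hlip : ∀ s t, |deriv σ s - deriv σ t| ≤ C₁ * |s - t|)
    (hC₁ : 0 ≤ C₁) (ha : ∀ r, |a r| ≤ 1) {x : EuclideanSpace ℝ (Fin d)} (hx : ‖x‖ ≤ 1)
    (W₁ W₂ : Wts d m) :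
    ‖netGrad d m σ a x W₁ - netGrad d m σ a x W₂‖ ≤ C₁ * (√m)⁻¹ * ‖W₁ - W₂‖ := by
  have hblock : ∀ r, ‖(netGrad d m σ a x W₁ - netGrad d m σ a x W₂) r‖
      ≤ C₁ * (√m)⁻¹ * ‖(W₁ - W₂) r‖ := fun r => by
    have hinner : |⟪W₁ r, x⟫ - ⟪W₂ r, x⟫| ≤ ‖(W₁ - W₂) r‖ := by
      rw [← inner_sub_left, ← PiLp.sub_apply]
      exact (abs_real_inner_le_norm _ _).trans (mul_le_of_le_one_right (norm_nonneg _) hx)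
    rw [PiLp.sub_apply, netGrad_apply, netGrad_apply, ← sub_smul, ← mul_sub, ← mul_sub,
      norm_smul, norm_mul, norm_mul, norm_inv, norm_of_nonneg (sqrt_nonneg _)]
    calc (√m)⁻¹ * (‖a r‖ * ‖deriv σ ⟪W₁ r, x⟫ - deriv σ ⟪W₂ r, x⟫‖) * ‖x‖
        ≤ (√m)⁻¹ * (1 * (C₁ * ‖(W₁ - W₂) r‖)) * 1 := by
          gcongr
          · exact ha r
          · exact (hlip _ _).trans (mul_le_mul_of_nonneg_left hinner hC₁)
      _ = C₁ * (√m)⁻¹ * ‖(W₁ - W₂) r‖ := by ring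
  rw [PiLp.norm_eq_of_L2, sqrt_le_left (by positivity), mul_pow, PiLp.norm_sq_eq_of_L2,
    Finset.mul_sum]
  exact Finset.sum_le_sum fun r _ => by
    rw [← mul_pow]; exact pow_le_pow_left₀ (norm_nonneg _) (hblock r) 2

theorem norm_jacT_le (hbd : ∀ t, |deriv σ t| ≤ C₁) (ha : ∀ r, |a r| ≤ 1)
    (hX : ∀ i, ‖X i‖ ≤ 1) (W : Wts d m) (v : EuclideanSpace ℝ (Fin n)) :
    ‖jacT d m n σ a X W v‖ ≤ C₁ * √n * ‖v‖ :=
  norm_sum_smul_le v ((abs_nonneg _).trans (hbd 0)) fun i => norm_netGrad_le hbd ha (hX i) W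

theorem norm_jacT_sub_le (hlip : ∀ s t, |deriv σ s - deriv σ t| ≤ C₁ * |s - t|)
    (hC₁ : 0 ≤ C₁) (ha : ∀ r, |a r| ≤ 1) (hX : ∀ i, ‖X i‖ ≤ 1) (W₁ W₂ : Wts d m)
    (v : EuclideanSpace ℝ (Fin n)) :
    ‖jacT d m n σ a X W₁ v - jacT d m n σ a X W₂ v‖
      ≤ C₁ * √n * (√m)⁻¹ * ‖W₁ - W₂‖ * ‖v‖ := by
  rw [jacT, jacT, ← Finset.sum_sub_distrib]
  simp_rw [← smul_sub]
  calc _ ≤ C₁ * (√m)⁻¹ * ‖W₁ - W₂‖ * √n * ‖v‖ :=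
        norm_sum_smul_le v (by positivity) fun i => norm_netGrad_sub_le hlip hC₁ ha (hX i) W₁ W₂
    _ = _ := by ring

theorem eq_zero_or_le_sq_of_ntk_lowerBound (hbd : ∀ t, |deriv σ t| ≤ C₁)
    (ha : ∀ r, |a r| ≤ 1) (hX : ∀ i, ‖X i‖ ≤ 1) {W₀ : Wts d m} {lam : ℝ}
    (h₀ : ∀ v, lam * ‖v‖ ^ 2 ≤ ‖jacT d m n σ a X W₀ v‖ ^ 2) :
    C₁ * √n = 0 ∨ lam ≤ (C₁ * √n) ^ 2 := by
  rcases Nat.eq_zero_or_pos n with rfl | hn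
  · simp
  have : Nonempty (Fin n) := ⟨⟨0, hn⟩⟩
  exact Or.inr (le_sq_of_lowerBound_le_upperBound h₀ (norm_jacT_le hbd ha hX W₀))

theorem ntk_lowerBound_of_norm_sub_le (hlip : ∀ s t, |deriv σ s - deriv σ t| ≤ C₁ * |s - t|)
    (hC₁ : 0 ≤ C₁) (ha : ∀ r, |a r| ≤ 1) (hX : ∀ i, ‖X i‖ ≤ 1) {W₀ W : Wts d m} {lam : ℝ}
    (hlam : 0 ≤ lam) (h₀ : ∀ v, lam * ‖v‖ ^ 2 ≤ ‖jacT d m n σ a X W₀ v‖ ^ 2)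
    (hW : C₁ * √n * (√m)⁻¹ * ‖W - W₀‖ ≤ 2 / 5 * √lam) (v : EuclideanSpace ℝ (Fin n)) :
    lam / 3 * ‖v‖ ^ 2 ≤ ‖jacT d m n σ a X W v‖ ^ 2 := by
  have hW₀ : √lam * ‖v‖ ≤ ‖jacT d m n σ a X W₀ v‖ :=
    abs_le_of_sq_le_sq' (by rw [mul_pow, sq_sqrt hlam]; exact h₀ v) (norm_nonneg _) |>.2
  have hpert : ‖jacT d m n σ a X W v - jacT d m n σ a X W₀ v‖ ≤ 2 / 5 * √lam * ‖v‖ :=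
    (norm_jacT_sub_le hlip hC₁ ha hX W W₀ v).trans
      (mul_le_mul_of_nonneg_right hW (norm_nonneg v))
  have hW' : 3 / 5 * (√lam * ‖v‖) ≤ ‖jacT d m n σ a X W v‖ := by
    linarith [norm_sub_norm_le (jacT d m n σ a X W₀ v) (jacT d m n σ a X W v),
      norm_sub_rev (jacT d m n σ a X W₀ v) (jacT d m n σ a X W v)]
  calc lam / 3 * ‖v‖ ^ 2 ≤ (3 / 5 * (√lam * ‖v‖)) ^ 2 := by
        rw [mul_pow, mul_pow, sq_sqrt hlam]; nlinarith [sq_nonneg ‖v‖]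
    _ ≤ ‖jacT d m n σ a X W v‖ ^ 2 := pow_le_pow_left₀ (by positivity) hW' 2

variable {W : ℝ → Wts d m} {η₀ : ℝ}

theorem hasDerivAt_norm_resid_sq (hσ : Differentiable ℝ σ)
    (hflow : IsGradientFlow d m n σ a X y η₀ W) (t : ℝ) :
    HasDerivAt (fun s => ‖resid d m n σ a X y (W s)‖ ^ 2)
      (-(2 * η₀) * ‖jacT d m n σ a X (W t) (resid d m n σ a X y (W t))‖ ^ 2) t := by
  have hloss : (fun s => ‖resid d m n σ a X y (W s)‖ ^ 2)
      = fun s => 2 * loss d m n σ a X y (W s) := by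
    funext s; simp [loss]
  rw [hloss]
  refine (((hasGradientAt_loss hσ (W t)).hasFDerivAt.comp_hasDerivAt t
    (gradient_loss_eq hσ (W t) ▸ hflow t)).const_mul 2).congr_deriv ?_
  simp only [InnerProductSpace.toDual_apply_apply, inner_neg_right, real_inner_smul_right,
    real_inner_self_eq_norm_sq]
  ring

theorem flow_bounds_of_ntk_lowerBound (hσ : Differentiable ℝ σ) (hbd : ∀ t, |deriv σ t| ≤ C₁)
    (ha : ∀ r, |a r| ≤ 1) (hX : ∀ i, ‖X i‖ ≤ 1) (hη₀ : 0 < η₀)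
    (hflow : IsGradientFlow d m n σ a X y η₀ W)
    {c R T : ℝ} (hc : 0 < c) (hR : ‖resid d m n σ a X y (W 0)‖ ≤ R) (hT : 0 ≤ T)
    (hntk : ∀ t ∈ Ico 0 T, ∀ v, c * ‖v‖ ^ 2 ≤ ‖jacT d m n σ a X (W t) v‖ ^ 2) :
    ‖resid d m n σ a X y (W T)‖ ≤ exp (-(η₀ * c) * T) * R ∧
      ‖W T - W 0‖ ≤ C₁ * √n * R / c * (1 - exp (-(η₀ * c) * T)) := by
  have hdecay : ∀ t ∈ Icc 0 T, ‖resid d m n σ a X y (W t)‖ ≤ exp (-(η₀ * c) * t) * R := by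
    intro t ht
    have hsq := le_mul_exp_of_hasDerivAt_le_neg_mul (κ := 2 * (η₀ * c))
      (hasDerivAt_norm_resid_sq hσ hflow) (fun s hs => by
        nlinarith [hntk s hs (resid d m n σ a X y (W s))]) t ht
    refine abs_le_of_sq_le_sq' ?_ (mul_nonneg (exp_pos _).le ((norm_nonneg _).trans hR)) |>.2
    calc ‖resid d m n σ a X y (W t)‖ ^ 2
        ≤ ‖resid d m n σ a X y (W 0)‖ ^ 2 * exp (-(2 * (η₀ * c)) * t) := hsq
      _ ≤ R ^ 2 * exp (-(2 * (η₀ * c)) * t) := by gcongr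
      _ = (exp (-(η₀ * c) * t) * R) ^ 2 := by rw [mul_pow, ← exp_nat_mul]; ring_nf
  refine ⟨hdecay T ⟨hT, le_rfl⟩, ?_⟩
  have hK : 0 ≤ C₁ * √n := mul_nonneg ((abs_nonneg _).trans (hbd 0)) (sqrt_nonneg _)
  have hspeed : ∀ t ∈ Ico 0 T, ‖-(η₀ • gradient (loss d m n σ a X y) (W t))‖
      ≤ η₀ * (C₁ * √n) * R * exp (-(η₀ * c) * t) := fun t ht => by
    rw [gradient_loss_eq hσ, norm_neg, norm_smul, norm_of_nonneg hη₀.le]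
    calc η₀ * ‖jacT d m n σ a X (W t) (resid d m n σ a X y (W t))‖
        ≤ η₀ * (C₁ * √n * (exp (-(η₀ * c) * t) * R)) := by
          gcongr
          exact (norm_jacT_le hbd ha hX _ _).trans
            (mul_le_mul_of_nonneg_left (hdecay t (Ico_subset_Icc_self ht)) hK)
      _ = η₀ * (C₁ * √n) * R * exp (-(η₀ * c) * t) := by ring
  convert norm_sub_le_of_norm_deriv_le_mul_exp (mul_pos hη₀ hc).ne' hflow hspeed T
    ⟨hT, le_rfl⟩ using 2
  field_simp

theorem ntk_lowerBound_along_flow (hσ : Differentiable ℝ σ) (hbd : ∀ t, |deriv σ t| ≤ C₁)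
    (hlip : ∀ s t, |deriv σ s - deriv σ t| ≤ C₁ * |s - t|) (ha : ∀ r, |a r| ≤ 1)
    (hX : ∀ i, ‖X i‖ ≤ 1) {lam R₀ : ℝ} (hlam : 0 < lam) (hη₀ : 0 < η₀)
    (h₀ : ∀ v, lam * ‖v‖ ^ 2 ≤ ‖jacT d m n σ a X (W 0) v‖ ^ 2)
    (hR₀ : ‖resid d m n σ a X y (W 0)‖ ≤ R₀) (hm : (9 * (C₁ * √n) ^ 3 * R₀ / lam ^ 2) ^ 2 ≤ m)
    (hflow : IsGradientFlow d m n σ a X y η₀ W) :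
    ∀ t ≥ 0, ∀ v, lam / 3 * ‖v‖ ^ 2 ≤ ‖jacT d m n σ a X (W t) v‖ ^ 2 := by
  have hC₁ : 0 ≤ C₁ := (abs_nonneg _).trans (hbd 0)
  have hR₀' : 0 ≤ R₀ := (norm_nonneg _).trans hR₀
  have hWc : Continuous W := continuous_iff_continuousAt.2 fun t => (hflow t).continuousAt
  have hnear : ∀ t ≥ 0, C₁ * √n * (√m)⁻¹ * ‖W t - W 0‖ < 2 / 5 * √lam := by
    refine forall_ge_lt_of_forall_Ico_le_imp_lt
      (continuous_const.mul (hWc.sub continuous_const).norm) fun T hT hbelow => ?_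
    have hdisp := (flow_bounds_of_ntk_lowerBound hσ hbd ha hX hη₀ hflow (div_pos hlam three_pos)
      hR₀ hT fun t ht =>
        ntk_lowerBound_of_norm_sub_le hlip hC₁ ha hX hlam.le h₀ (hbelow t ht)).2
    calc C₁ * √n * (√m)⁻¹ * ‖W T - W 0‖ ≤ C₁ * √n * (√m)⁻¹ * (3 * (C₁ * √n) * R₀ / lam) := by
          gcongr
          refine hdisp.trans (le_of_le_of_eq (mul_le_of_le_one_right (by positivity) ?_) (by ring))
          linarith [exp_pos (-(η₀ * (lam / 3)) * T)]
      _ ≤ √lam / 3 := mul_inv_sqrt_mul_le_sqrt_div_three hlam hR₀' (by positivity)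
          (eq_zero_or_le_sq_of_ntk_lowerBound hbd ha hX h₀) hm
      _ < 2 / 5 * √lam := by linarith [sqrt_pos.2 hlam]
  exact fun t ht => ntk_lowerBound_of_norm_sub_le hlip hC₁ ha hX hlam.le h₀ (hnear t ht).le

end Network

theorem full_training_gradient_flow_bounds_general
    (d m n : ℕ) (σ : ℝ → ℝ) (hσ : ContDiff ℝ 1 σ)
    (C₁ : ℝ) (hbd : ∀ t : ℝ, |deriv σ t| ≤ C₁)
    (hlip : ∀ s t : ℝ, |deriv σ s - deriv σ t| ≤ C₁ * |s - t|)
    (a : Fin m → ℝ) (ha : ∀ r, a r = 1 ∨ a r = -1)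
    (X : Fin n → EuclideanSpace ℝ (Fin d)) (hX : ∀ i, ‖X i‖ = 1)
    (y : EuclideanSpace ℝ (Fin n)) (W₀ : Wts d m)
    (lam R₀ η₀ : ℝ) (hlam : 0 < lam) (hη₀ : 0 < η₀)
    (hNTK : ∀ v : EuclideanSpace ℝ (Fin n),
      lam * ‖v‖ ^ 2 ≤
        ∑ i, ∑ j, v i * ⟪Jrow d m n σ a X W₀ i, Jrow d m n σ a X W₀ j⟫ * v j)
    (hg0 : ‖resid d m n σ a X y W₀‖ ≤ R₀)
    (hm' : (9 * (C₁ * Real.sqrt n) ^ 3 * R₀ / lam ^ 2) ^ 2 ≤ (m : ℝ))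
    (W : ℝ → Wts d m) (hW0 : W 0 = W₀)
    (hflow : ∀ t : ℝ, HasDerivAt W (-(η₀ • gradient (loss d m n σ a X y) (W t))) t) :
    ∀ t : ℝ, 0 ≤ t →
      ‖resid d m n σ a X y (W t)‖ ≤ Real.exp (-(η₀ * lam * t) / 3) * R₀ ∧
      ‖W t - W₀‖ ≤ 3 * (C₁ * Real.sqrt n) * R₀ / lam * (1 - Real.exp (-(η₀ * lam * t) / 3)) ∧
      ∀ v : EuclideanSpace ℝ (Fin n),
        lam / 3 * ‖v‖ ^ 2 ≤
          ∑ i, ∑ j, v i * ⟪Jrow d m n σ a X (W t) i, Jrow d m n σ a X (W t) j⟫ * v j := by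
  subst hW0
  have hσ' : Differentiable ℝ σ := hσ.differentiable one_ne_zero
  have ha' : ∀ r, |a r| ≤ 1 := fun r => by rcases ha r with h | h <;> simp [h]
  have hX' : ∀ i, ‖X i‖ ≤ 1 := fun i => (hX i).le
  have hf : IsGradientFlow d m n σ a X y η₀ W := hflow
  have hN : ∀ v, lam * ‖v‖ ^ 2 ≤ ‖jacT d m n σ a X (W 0) v‖ ^ 2 := fun v => by
    rw [← ntk_quadForm_eq_norm_jacT_sq hσ']; exact hNTK v
  have hntk := ntk_lowerBound_along_flow hσ' hbd hlip ha' hX' hlam hη₀ hN hg0 hm' hf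
  intro t ht
  obtain ⟨hresid, hdisp⟩ := flow_bounds_of_ntk_lowerBound hσ' hbd ha' hX' hη₀ hf
    (div_pos hlam three_pos) hg0 ht fun s hs => hntk s hs.1
  have hexp : -(η₀ * lam * t) / 3 = -(η₀ * (lam / 3)) * t := by ring
  rw [hexp]
  refine ⟨hresid, le_of_le_of_eq hdisp (by ring), fun v => ?_⟩
  rw [ntk_quadForm_eq_norm_jacT_sq hσ']
  exact hntk t ht v

/-- boundedness of gradient flow for full training (deterministic Lemma A.1(b)). -/
theorem full_training_gradient_flow_bounds
    (d m n : ℕ) (hm : 1 ≤ m) (hn : 1 ≤ n) (σ : ℝ → ℝ) (hσ : ContDiff ℝ 1 σ)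
    (C₁ : ℝ) (hbd : ∀ t : ℝ, |deriv σ t| ≤ C₁)
    (hlip : ∀ s t : ℝ, |deriv σ s - deriv σ t| ≤ C₁ * |s - t|)
    (a : Fin m → ℝ) (ha : ∀ r, a r = 1 ∨ a r = -1)
    (X : Fin n → EuclideanSpace ℝ (Fin d)) (hX : ∀ i, ‖X i‖ = 1)
    (y : EuclideanSpace ℝ (Fin n)) (W₀ : Wts d m)
    (lam R₀ η₀ : ℝ) (hlam : 0 < lam) (hη₀ : 0 < η₀)
    (hNTK : ∀ v : EuclideanSpace ℝ (Fin n),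
      lam * ‖v‖ ^ 2 ≤
        ∑ i, ∑ j, v i * ⟪Jrow d m n σ a X W₀ i, Jrow d m n σ a X W₀ j⟫ * v j)
    (hg0 : ‖resid d m n σ a X y W₀‖ ≤ R₀)
    (hm' : (9 * (C₁ * Real.sqrt n) ^ 3 * R₀ / lam ^ 2) ^ 2 ≤ (m : ℝ))
    (W : ℝ → Wts d m) (hW0 : W 0 = W₀)
    (hflow : ∀ t : ℝ, HasDerivAt W (-(η₀ • gradient (loss d m n σ a X y) (W t))) t) :
    ∀ t : ℝ, 0 ≤ t →
      ‖resid d m n σ a X y (W t)‖ ≤ Real.exp (-(η₀ * lam * t) / 3) * R₀ ∧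
      ‖W t - W₀‖ ≤ 3 * (C₁ * Real.sqrt n) * R₀ / lam * (1 - Real.exp (-(η₀ * lam * t) / 3)) ∧
      ∀ v : EuclideanSpace ℝ (Fin n),
        lam / 3 * ‖v‖ ^ 2 ≤
          ∑ i, ∑ j, v i * ⟪Jrow d m n σ a X (W t) i, Jrow d m n σ a X (W t) j⟫ * v j :=
  full_training_gradient_flow_bounds_general d m n σ hσ C₁ hbd hlip a ha X hX y W₀ lam R₀ η₀ hlam
    hη₀ hNTK hg0 hm' W hW0 hflow
end
end

section
/- Pointwise Frobenius bound on the difference of full and Taylorized Jacobians (inequality (A.5) in the proof of Lemma A.2(a)): Assume σ is k-times continuously differentiable with σ^{(k)} L-Lipschitz, and ‖x_i‖ = 1 for all i. Then for every weight matrix W ∈ (ℝ^d)^m, ‖J(W) − J^{(k)}(W)‖_F² = Σ_{i=1}^n (1/m) Σ_{r=1}^m (σ'(⟨w_r, x_i⟩) − p'_{r,i}(⟨w_r, x_i⟩))² ‖x_i‖² ≤ n (L/k!)² (1/m) Σ_{r=1}^m ‖w_r − w_{r,0}‖^{2k}, where p_{r,i}(t) = Σ_{j=0}^k (σ^{(j)}(⟨w_{r,0},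 x_i⟩)/j!)(t − ⟨w_{r,0}, x_i⟩)^j is the degree-k Taylor polynomial of σ around ⟨w_{r,0}, x_i⟩. -/
open scoped BigOperators RealInnerProductSpace
noncomputable section

/-!
Each row of `J(W) - J⁽ᵏ⁾(W)` has `r`-th block `m^{-1/2} a_r (σ' - p'_{r,i})(⟨w_r, xᵢ⟩) xᵢ`, and
`a_r² = 1`; this gives the identity. For the bound, `p'_{r,i}` is the degree-`(k-1)` Taylor
polynomial of `σ'`, whose `(k-1)`-st derivative `σ⁽ᵏ⁾` is `L`-Lipschitz. Integrating the Lipschitz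
estimate `k - 1` times from the Taylor point (each remainder is the derivative of the next one and
vanishes there) gives `|σ' - p'_{r,i}|(t) ≤ L/k! |t - ⟨w_{r,0}, xᵢ⟩|^k`, and at `t = ⟨w_r, xᵢ⟩`
Cauchy–Schwarz with `‖xᵢ‖ = 1` bounds this by `L/k! ‖w_r - w_{r,0}‖^k`.
-/

open scoped Nat Interval

open MeasureTheory in
theorem abs_le_of_hasDerivAt_of_abs_deriv_le {R R' : ℝ → ℝ} {x₀ x C : ℝ} {p : ℕ}
    (hR : ∀ u, HasDerivAt R (R' u) u) (hR' : IntervalIntegrable R' volume x₀ x)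
    (h₀ : R x₀ = 0) (hbound : ∀ u, |R' u| ≤ C * |u - x₀| ^ p) :
    |R x| ≤ C * |x - x₀| ^ (p + 1) / (p + 1) := by
  have hftc : ∫ u in x₀..x, R' u = R x := by
    rw [intervalIntegral.integral_eq_sub_of_hasDerivAt (fun u _ => hR u) hR', h₀, sub_zero]
  have hint : IntegrableOn (fun u => C * |u - x₀| ^ p) (Ι x₀ x) :=
    (((continuous_id.sub continuous_const).abs.pow p).const_mul C).integrableOn_uIoc
  calc |R x| = |∫ u in Ι x₀ x, R' u| := by
        rw [← hftc, intervalIntegral.abs_integral_eq_abs_integral_uIoc]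
    _ ≤ ∫ u in Ι x₀ x, C * |u - x₀| ^ p :=
      norm_integral_le_of_norm_le hint
        (ae_of_all _ fun u => (Real.norm_eq_abs _).trans_le (hbound u))
    _ = C * |x - x₀| ^ (p + 1) / (p + 1) := by
      rw [integral_const_mul, integral_pow_abs_sub_uIoc, mul_div_assoc]

def taylorPoly (f : ℝ → ℝ) (k : ℕ) (x₀ : ℝ) (s : ℝ) : ℝ :=
  ∑ j ∈ Finset.range (k + 1), iteratedDeriv j f x₀ / j ! * (s - x₀) ^ j

theorem taylorPoly_self (f : ℝ → ℝ) (k : ℕ) (x₀ : ℝ) : taylorPoly f k x₀ x₀ = f x₀ := by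
  rw [taylorPoly, Finset.sum_eq_single 0] <;> simp +contextual

theorem differentiable_taylorPoly (f : ℝ → ℝ) (k : ℕ) (x₀ : ℝ) :
    Differentiable ℝ (taylorPoly f k x₀) := by
  unfold taylorPoly
  fun_prop

theorem hasDerivAt_taylorPoly_succ (f : ℝ → ℝ) (k : ℕ) (x₀ u : ℝ) :
    HasDerivAt (taylorPoly f (k + 1) x₀) (taylorPoly (deriv f) k x₀ u) u := by
  have hterm : ∀ j : ℕ, HasDerivAt (fun s => iteratedDeriv j f x₀ / j ! * (s - x₀) ^ j)
      (iteratedDeriv j f x₀ / j ! * (j * (u - x₀) ^ (j - 1))) u := fun j => by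
    simpa using (((hasDerivAt_id u).sub_const x₀).pow j).const_mul (iteratedDeriv j f x₀ / j !)
  refine (HasDerivAt.fun_sum fun j _ => hterm j).congr_deriv ?_
  rw [Finset.sum_range_succ', taylorPoly]
  simp only [Nat.cast_zero, zero_mul, mul_zero, add_zero]
  refine Finset.sum_congr rfl fun j _ => ?_
  rw [iteratedDeriv_succ', Nat.factorial_succ, Nat.add_sub_cancel]
  push_cast
  field_simp

theorem abs_sub_taylorPoly_le {L : ℝ} :
    ∀ {k : ℕ} {f : ℝ → ℝ}, ContDiff ℝ k f →
      (∀ s t, |iteratedDeriv k f s - iteratedDeriv k f t| ≤ L * |s - t|) → ∀ x₀ x,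
      |f x - taylorPoly f k x₀ x| ≤ L / (k + 1)! * |x - x₀| ^ (k + 1)
  | 0, f, _, hL, x₀, x => by simpa [taylorPoly] using hL x x₀
  | k + 1, f, hf, hL, x₀, x => by
    obtain ⟨hdiff, -, hf'⟩ := (contDiff_succ_iff_deriv (n := k)).mp (by exact_mod_cast hf)
    have hR : ∀ u, HasDerivAt (fun s => f s - taylorPoly f (k + 1) x₀ s)
        (deriv f u - taylorPoly (deriv f) k x₀ u) u := fun u =>
      (hdiff u).hasDerivAt.sub (hasDerivAt_taylorPoly_succ f k x₀ u)
    have hR' : Continuous fun u => deriv f u - taylorPoly (deriv f) k x₀ u :=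
      hf'.continuous.sub (differentiable_taylorPoly _ k x₀).continuous
    have hderiv_bound :=
      abs_sub_taylorPoly_le hf' (by simpa only [← iteratedDeriv_succ'] using hL) x₀
    calc |f x - taylorPoly f (k + 1) x₀ x|
        ≤ L / (k + 1)! * |x - x₀| ^ (k + 1 + 1) / ((k + 1 : ℕ) + 1) :=
          abs_le_of_hasDerivAt_of_abs_deriv_le hR (hR'.intervalIntegrable _ _)
            (by rw [taylorPoly_self, sub_self]) hderiv_bound
      _ = L / (k + 1 + 1)! * |x - x₀| ^ (k + 1 + 1) := by
          rw [Nat.factorial_succ (k + 1)]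
          push_cast
          field_simp

theorem abs_deriv_sub_deriv_taylorPoly_le {f : ℝ → ℝ} {k : ℕ} {L : ℝ} (hk : 1 ≤ k)
    (hf : ContDiff ℝ k f) (hL : ∀ s t, |iteratedDeriv k f s - iteratedDeriv k f t| ≤ L * |s - t|)
    (x₀ x : ℝ) : |deriv f x - deriv (taylorPoly f k x₀) x| ≤ L / k ! * |x - x₀| ^ k := by
  obtain ⟨k, rfl⟩ := Nat.exists_eq_add_of_le' hk
  rw [(hasDerivAt_taylorPoly_succ f k x₀ x).deriv]
  obtain ⟨-, -, hf'⟩ := (contDiff_succ_iff_deriv (n := k)).mp (by exact_mod_cast hf)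
  exact abs_sub_taylorPoly_le hf' (by simpa only [← iteratedDeriv_succ'] using hL) x₀ x

section InnerProductSpace

variable {E : Type*} [NormedAddCommGroup E] [InnerProductSpace ℝ E]

theorem sq_deriv_sub_deriv_taylorPoly_inner_le {σ : ℝ → ℝ} {k : ℕ} {L : ℝ} (hk : 1 ≤ k)
    (hσ : ContDiff ℝ k σ) (hL : ∀ s t, |iteratedDeriv k σ s - iteratedDeriv k σ t| ≤ L * |s - t|)
    {w w₀ x : E} (hx : ‖x‖ ≤ 1) :
    (deriv σ ⟪w, x⟫ - deriv (taylorPoly σ k ⟪w₀, x⟫) ⟪w, x⟫) ^ 2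
      ≤ (L / k !) ^ 2 * ‖w - w₀‖ ^ (2 * k) := by
  have hinner : |⟪w, x⟫ - ⟪w₀, x⟫| ≤ ‖w - w₀‖ := by
    rw [← inner_sub_left]
    exact (abs_real_inner_le_norm _ _).trans (mul_le_of_le_one_right (norm_nonneg _) hx)
  calc (deriv σ ⟪w, x⟫ - deriv (taylorPoly σ k ⟪w₀, x⟫) ⟪w, x⟫) ^ 2
      = |deriv σ ⟪w, x⟫ - deriv (taylorPoly σ k ⟪w₀, x⟫) ⟪w, x⟫| ^ 2 := (sq_abs _).symm
    _ ≤ (L / k ! * |⟪w, x⟫ - ⟪w₀, x⟫| ^ k) ^ 2 :=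
      pow_le_pow_left₀ (abs_nonneg _) (abs_deriv_sub_deriv_taylorPoly_le hk hσ hL _ _) 2
    _ = (L / k !) ^ 2 * (|⟪w, x⟫ - ⟪w₀, x⟫| ^ 2) ^ k := by ring
    _ ≤ (L / k !) ^ 2 * (‖w - w₀‖ ^ 2) ^ k := by gcongr
    _ = (L / k !) ^ 2 * ‖w - w₀‖ ^ (2 * k) := by rw [← pow_mul]

variable {ι : Type*} [Fintype ι] [CompleteSpace E]

theorem hasGradientAt_sum_comp_inner {g : ι → ℝ → ℝ} {g' : ι → ℝ} {x : E}
    {W : PiLp 2 fun _ : ι => E} (hg : ∀ r, HasDerivAt (g r) (g' r) ⟪W r, x⟫) :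
    HasGradientAt (fun V : PiLp 2 (fun _ : ι => E) => ∑ r, g r ⟪V r, x⟫)
      (WithLp.toLp 2 fun r => g' r • x) W := by
  rw [hasGradientAt_iff_hasFDerivAt]
  have hinner : ∀ r, HasFDerivAt (fun V : PiLp 2 (fun _ : ι => E) => ⟪V r, x⟫)
      ((innerSL ℝ x).comp (PiLp.proj 2 (fun _ : ι => E) r)) W := fun r => by
    convert ((innerSL ℝ x).comp (PiLp.proj 2 (fun _ : ι => E) r)).hasFDerivAt using 1
    ext V
    simp [real_inner_comm]
  refine (HasFDerivAt.fun_sum fun r _ => (hg r).comp_hasFDerivAt W (hinner r)).congr_fderiv ?_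
  ext V
  simp [PiLp.inner_apply, real_inner_smul_left]

theorem gradient_const_mul_sum_comp_inner {ψ : ι → ℝ → ℝ} {c : ℝ} {a : ι → ℝ} {x : E}
    {W : PiLp 2 fun _ : ι => E} (hψ : ∀ r, DifferentiableAt ℝ (ψ r) ⟪W r, x⟫) :
    gradient (fun V : PiLp 2 (fun _ : ι => E) => c * ∑ r, a r * ψ r ⟪V r, x⟫) W
      = WithLp.toLp 2 fun r => (c * a r * deriv (ψ r) ⟪W r, x⟫) • x := by
  simp_rw [Finset.mul_sum, ← mul_assoc]
  exact (hasGradientAt_sum_comp_inner fun r => (hψ r).hasDerivAt.const_mul (c * a r)).gradient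

end InnerProductSpace

section Jacobian

variable {d m n k : ℕ} {σ : ℝ → ℝ} {a : Fin m → ℝ} {W₀ W : Wts d m}
  {X : Fin n → EuclideanSpace ℝ (Fin d)}

theorem jrow_eq (hσ : Differentiable ℝ σ) (i : Fin n) :
    Jrow d m n σ a X W i
      = WithLp.toLp 2 fun r => ((√m)⁻¹ * a r * deriv σ ⟪W r, X i⟫) • X i :=
  gradient_const_mul_sum_comp_inner fun _ => hσ _

theorem jrowT_eq (i : Fin n) :
    JrowT d m n k σ a W₀ X W i = WithLp.toLp 2 fun r =>
      ((√m)⁻¹ * a r * deriv (taylorPoly σ k ⟪W₀ r, X i⟫) ⟪W r, X i⟫) • X i := by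
  have hnetT : (fun V => netT d m k σ a W₀ V (X i))
      = fun V : Wts d m => (√m)⁻¹ * ∑ r, a r * taylorPoly σ k ⟪W₀ r, X i⟫ ⟪V r, X i⟫ := by
    funext V
    simp only [netT, taylorPoly, inner_sub_left]
  rw [JrowT, hnetT]
  exact gradient_const_mul_sum_comp_inner fun _ => differentiable_taylorPoly _ _ _ _

theorem norm_jrow_sub_jrowT_sq (hσ : Differentiable ℝ σ) (ha : ∀ r, a r = 1 ∨ a r = -1)
    (i : Fin n) :
    ‖Jrow d m n σ a X W i - JrowT d m n k σ a W₀ X W i‖ ^ 2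
      = 1 / m * ∑ r, (deriv σ ⟪W r, X i⟫
          - deriv (taylorPoly σ k ⟪W₀ r, X i⟫) ⟪W r, X i⟫) ^ 2 * ‖X i‖ ^ 2 := by
  rw [jrow_eq hσ, jrowT_eq, ← WithLp.toLp_sub, PiLp.norm_sq_eq_of_L2, Finset.mul_sum]
  refine Finset.sum_congr rfl fun r _ => ?_
  have ha2 : a r ^ 2 = 1 := by rcases ha r with h | h <;> simp [h]
  rw [WithLp.ofLp_toLp, Pi.sub_apply, ← sub_smul, norm_smul, mul_pow, Real.norm_eq_abs, sq_abs, ← mul_sub,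
    mul_pow, mul_pow, ha2, inv_pow, Real.sq_sqrt m.cast_nonneg]
  ring

end Jacobian

theorem jacobian_difference_pointwise_general
    (d m n k : ℕ) (hk : 1 ≤ k) (σ : ℝ → ℝ) (hσ : ContDiff ℝ k σ)
    (L : ℝ) (hlip : ∀ s t : ℝ, |iteratedDeriv k σ s - iteratedDeriv k σ t| ≤ L * |s - t|)
    (a : Fin m → ℝ) (ha : ∀ r, a r = 1 ∨ a r = -1)
    (W₀ : Wts d m) (X : Fin n → EuclideanSpace ℝ (Fin d)) (hX : ∀ i, ‖X i‖ = 1)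
    (W : Wts d m) :
    (∑ i, ‖Jrow d m n σ a X W i - JrowT d m n k σ a W₀ X W i‖ ^ 2
      = ∑ i, (1 / (m : ℝ)) *
          ∑ r, (deriv σ ⟪W r, X i⟫ -
              deriv (fun s : ℝ => ∑ j ∈ Finset.range (k + 1),
                  (iteratedDeriv j σ ⟪W₀ r, X i⟫ / (j.factorial : ℝ)) * (s - ⟪W₀ r, X i⟫) ^ j)
                ⟪W r, X i⟫) ^ 2 * ‖X i‖ ^ 2) ∧
    ∑ i, ‖Jrow d m n σ a X W i - JrowT d m n k σ a W₀ X W i‖ ^ 2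
      ≤ (n : ℝ) * (L / (k.factorial : ℝ)) ^ 2 *
          ((1 / (m : ℝ)) * ∑ r, ‖W r - W₀ r‖ ^ (2 * k)) := by
  have hσ' : Differentiable ℝ σ := hσ.differentiable (by norm_cast; omega)
  have hrows := fun i => norm_jrow_sub_jrowT_sq (k := k) (W₀ := W₀) (W := W) (X := X) hσ' ha i
  refine ⟨Finset.sum_congr rfl fun i _ => hrows i, ?_⟩
  calc ∑ i, ‖Jrow d m n σ a X W i - JrowT d m n k σ a W₀ X W i‖ ^ 2
      = ∑ i, 1 / (m : ℝ) * ∑ r, (deriv σ ⟪W r, X i⟫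
          - deriv (taylorPoly σ k ⟪W₀ r, X i⟫) ⟪W r, X i⟫) ^ 2 * ‖X i‖ ^ 2 :=
        Finset.sum_congr rfl fun i _ => hrows i
    _ ≤ ∑ _i : Fin n, 1 / (m : ℝ) * ∑ r, (L / k !) ^ 2 * ‖W r - W₀ r‖ ^ (2 * k) := by
        refine Finset.sum_le_sum fun i _ =>
          mul_le_mul_of_nonneg_left (Finset.sum_le_sum fun r _ => ?_) (by positivity)
        rw [hX i, one_pow, mul_one]
        exact sq_deriv_sub_deriv_taylorPoly_inner_le hk hσ hlip (hX i).le
    _ = n * (L / k !) ^ 2 * (1 / (m : ℝ) * ∑ r, ‖W r - W₀ r‖ ^ (2 * k)) := by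
        rw [Finset.sum_const, Finset.card_univ, Fintype.card_fin, nsmul_eq_mul, ← Finset.mul_sum]
        ring

/-- pointwise Frobenius bound on the difference of the full and Taylorized
Jacobians (inequality (A.5) in the proof of Lemma A.2(a)). -/
theorem jacobian_difference_pointwise
    (d m n k : ℕ) (hm : 1 ≤ m) (hk : 1 ≤ k) (σ : ℝ → ℝ) (hσ : ContDiff ℝ k σ)
    (L : ℝ) (hlip : ∀ s t : ℝ, |iteratedDeriv k σ s - iteratedDeriv k σ t| ≤ L * |s - t|)
    (a : Fin m → ℝ) (ha : ∀ r, a r = 1 ∨ a r = -1)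
    (W₀ : Wts d m) (X : Fin n → EuclideanSpace ℝ (Fin d)) (hX : ∀ i, ‖X i‖ = 1)
    (W : Wts d m) :
    (∑ i, ‖Jrow d m n σ a X W i - JrowT d m n k σ a W₀ X W i‖ ^ 2
      = ∑ i, (1 / (m : ℝ)) *
          ∑ r, (deriv σ ⟪W r, X i⟫ -
              deriv (fun s : ℝ => ∑ j ∈ Finset.range (k + 1),
                  (iteratedDeriv j σ ⟪W₀ r, X i⟫ / (j.factorial : ℝ)) * (s - ⟪W₀ r, X i⟫) ^ j)
                ⟪W r, X i⟫) ^ 2 * ‖X i‖ ^ 2) ∧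
    ∑ i, ‖Jrow d m n σ a X W i - JrowT d m n k σ a W₀ X W i‖ ^ 2
      ≤ (n : ℝ) * (L / (k.factorial : ℝ)) ^ 2 *
          ((1 / (m : ℝ)) * ∑ r, ‖W r - W₀ r‖ ^ (2 * k)) :=
  jacobian_difference_pointwise_general d m n k hk σ hσ L hlip a ha W₀ X hX W
end
end

section
/- Boundedness of the Taylorized Jacobian on a Frobenius ball (part of Lemma A.2(a)): Assume |σ'(t)| ≤ C₁ for all t, σ is k-times continuously differentiable with σ^{(k)} L-Lipschitz, and ‖x_i‖ = 1 for all i. Then for every C₀ > 0 and every W ∈ (ℝ^d)^m with ‖W − W₀‖_F ≤ C₀: ‖J^{(k)}(W)‖_F ≤ C₁ √n + (L √n / k!) · C₀^k · m^{−1/2}. -/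
open scoped BigOperators RealInnerProductSpace
noncomputable section

/-!
The `r`-th block of the gradient of `W ↦ f^{(k)}_W(x)` is `m^{-1/2} a_r P_r(s_r) x`, where
`s_r = ⟨w_r - w_{r,0}, x⟩` and `P_r` is the degree-`(k-1)` Taylor polynomial of `σ'` at
`⟨w_{r,0}, x⟩`. As `σ^{(k)}` is `L`-Lipschitz, `|P_r(s) - σ'(⟨w_{r,0}, x⟩ + s)| ≤ L|s|^k/k!`, so the
coefficients are bounded by `m^{-1/2}(C₁ + L|s_r|^k/k!)`. The constant vector `(C₁)_r` has norm
`√m C₁`, and `‖(|s_r|^k)_r‖ ≤ ‖s‖^k ≤ ‖W - W₀‖^k` since `|s_r| ≤ ‖w_r - w_{r,0}‖` when `‖x‖ = 1`.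
This bounds every row of the Jacobian, and the `n` rows contribute the factor `√n`.
-/
open Finset

-- The degree-`p` Taylor polynomial of `g` at `u`, evaluated at `u + s` (so `s` is the increment);
-- it is the inner sum in `netT`.
def taylorEval (g : ℝ → ℝ) (p : ℕ) (u s : ℝ) : ℝ :=
  ∑ j ∈ range (p + 1), iteratedDeriv j g u / (j.factorial : ℝ) * s ^ j

lemma taylorEval_zero_right (g : ℝ → ℝ) (p : ℕ) (u : ℝ) : taylorEval g p u 0 = g u := by
  simp [taylorEval, sum_range_succ']

lemma hasDerivAt_taylorEval (g : ℝ → ℝ) (p : ℕ) (u t : ℝ) :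
    HasDerivAt (taylorEval g (p + 1) u) (taylorEval (deriv g) p u t) t := by
  have hterm : ∀ j : ℕ, HasDerivAt
      (fun s => iteratedDeriv (j + 1) g u / ((j + 1).factorial : ℝ) * s ^ (j + 1))
      (iteratedDeriv j (deriv g) u / (j.factorial : ℝ) * t ^ j) t := by
    intro j
    refine ((hasDerivAt_pow (j + 1) t).const_mul
      (iteratedDeriv (j + 1) g u / ((j + 1).factorial : ℝ))).congr_deriv ?_
    rw [iteratedDeriv_succ', Nat.factorial_succ, Nat.add_sub_cancel]
    push_cast
    field_simp
  unfold taylorEval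
  simp_rw [sum_range_succ' _ (p + 1)]
  simpa using (HasDerivAt.fun_sum fun j _ => hterm j).add_const (iteratedDeriv 0 g u)

lemma abs_le_of_hasDerivAt_of_abs_le_mul_pow_of_nonneg {φ ψ : ℝ → ℝ} {C : ℝ} {q : ℕ}
    (h₀ : φ 0 = 0) (hφ : ∀ t, HasDerivAt φ (ψ t) t) (hψ : ∀ t, |ψ t| ≤ C * |t| ^ q)
    {s : ℝ} (hs : 0 ≤ s) : |φ s| ≤ C * s ^ (q + 1) / (q + 1) := by
  have hB : ∀ t, HasDerivAt (fun t => C * t ^ (q + 1) / (q + 1)) (C * t ^ q) t := by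
    intro t
    refine (((hasDerivAt_pow (q + 1) t).const_mul C).div_const ((q : ℝ) + 1)).congr_deriv ?_
    rw [Nat.add_sub_cancel]
    push_cast
    field_simp
  refine image_norm_le_of_norm_deriv_right_le_deriv_boundary (a := 0) (b := s)
    (fun t _ => (hφ t).continuousAt.continuousWithinAt) (fun t _ => (hφ t).hasDerivWithinAt)
    (by simp [h₀]) hB (fun t ht => ?_) ⟨hs, le_rfl⟩
  simpa [abs_of_nonneg ht.1] using hψ t

lemma abs_le_of_hasDerivAt_of_abs_le_mul_pow {φ ψ : ℝ → ℝ} {C : ℝ} {q : ℕ}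
    (h₀ : φ 0 = 0) (hφ : ∀ t, HasDerivAt φ (ψ t) t) (hψ : ∀ t, |ψ t| ≤ C * |t| ^ q) (s : ℝ) :
    |φ s| ≤ C * |s| ^ (q + 1) / (q + 1) := by
  rcases le_or_gt 0 s with hs | hs
  · simpa [abs_of_nonneg hs] using abs_le_of_hasDerivAt_of_abs_le_mul_pow_of_nonneg h₀ hφ hψ hs
  · have hφ' : ∀ t, HasDerivAt (fun t => φ (-t)) (-ψ (-t)) t := fun t => by
      simpa [Function.comp_def] using (hφ (-t)).comp t (hasDerivAt_neg t)
    simpa [abs_of_neg hs] using abs_le_of_hasDerivAt_of_abs_le_mul_pow_of_nonneg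
      (by simpa using h₀) hφ' (fun t => by simpa using hψ (-t)) (neg_nonneg.mpr hs.le)

-- The `s`-derivative of the remainder of order `p + 1` of `g` is the remainder of order `p` of
-- `g'`, so the estimate is integrated up from the Lipschitz bound at order `0`.
theorem abs_sub_taylorEval_le {g : ℝ → ℝ} {L : ℝ} {p : ℕ} (hg : ContDiff ℝ p g)
    (hlip : ∀ s t, |iteratedDeriv p g s - iteratedDeriv p g t| ≤ L * |s - t|) (u s : ℝ) :
    |g (u + s) - taylorEval g p u s| ≤ L * |s| ^ (p + 1) / (p + 1).factorial := by
  induction p generalizing g s with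
  | zero => simpa [taylorEval] using hlip (u + s) u
  | succ p ih =>
    obtain ⟨hdiff, -, hg'⟩ := contDiff_succ_iff_deriv.mp
      (by exact_mod_cast hg : ContDiff ℝ ((p : WithTop ℕ∞) + 1) g)
    have hlip' : ∀ s t,
        |iteratedDeriv p (deriv g) s - iteratedDeriv p (deriv g) t| ≤ L * |s - t| := by
      simpa [← iteratedDeriv_succ'] using hlip
    have hderiv : ∀ t, HasDerivAt (fun s => g (u + s) - taylorEval g (p + 1) u s)
        (deriv g (u + t) - taylorEval (deriv g) p u t) t := fun t =>
      ((hdiff (u + t)).hasDerivAt.comp_const_add u t).sub (hasDerivAt_taylorEval g p u t)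
    have := abs_le_of_hasDerivAt_of_abs_le_mul_pow (by simp [taylorEval_zero_right]) hderiv
      (fun t => (ih hg' hlip' t).trans_eq (div_mul_eq_mul_div _ _ _).symm) s
    refine this.trans_eq ?_
    rw [Nat.factorial_succ (p + 1)]
    push_cast
    field_simp

section PiLp

variable {ι E : Type*} [Fintype ι]

lemma PiLp.norm_le_norm_of_norm_apply_le {β γ : ι → Type*} [∀ i, SeminormedAddCommGroup (β i)]
    [∀ i, SeminormedAddCommGroup (γ i)] {f : PiLp 2 β} {g : PiLp 2 γ}
    (h : ∀ i, ‖f i‖ ≤ ‖g i‖) : ‖f‖ ≤ ‖g‖ := by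
  rw [PiLp.norm_eq_of_L2, PiLp.norm_eq_of_L2]
  gcongr with i
  exact h i

lemma EuclideanSpace.norm_abs_pow_le (v : EuclideanSpace ℝ ι) (q : ℕ) :
    ‖(WithLp.toLp 2 fun i => |v i| ^ (q + 1) : EuclideanSpace ℝ ι)‖ ≤ ‖v‖ ^ (q + 1) := by
  calc ‖(WithLp.toLp 2 fun i => |v i| ^ (q + 1) : EuclideanSpace ℝ ι)‖
      ≤ ‖‖v‖ ^ q • v‖ := PiLp.norm_le_norm_of_norm_apply_le fun i => by
        simp only [PiLp.smul_apply, norm_smul, norm_pow, Real.norm_eq_abs, pow_succ, abs_mul,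
          abs_pow, abs_abs, abs_norm]
        gcongr
        exact PiLp.norm_apply_le v i
    _ = ‖v‖ ^ (q + 1) := by rw [norm_smul, norm_pow, norm_norm, pow_succ]

variable [NormedAddCommGroup E] [InnerProductSpace ℝ E]

lemma PiLp.norm_toLp_smul (c : ι → ℝ) (x : E) :
    ‖(WithLp.toLp 2 fun i => c i • x : PiLp 2 fun _ : ι => E)‖
      = ‖(WithLp.toLp 2 c : EuclideanSpace ℝ ι)‖ * ‖x‖ := by
  rw [PiLp.norm_eq_of_L2, PiLp.norm_eq_of_L2, ← Real.sqrt_sq (norm_nonneg x), ← Real.sqrt_mul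
    (by positivity), Finset.sum_mul]
  simp [norm_smul, mul_pow]

lemma hasGradientAt_sum_comp_inner_sub [CompleteSpace E] {f : ι → ℝ → ℝ} {f' : ι → ℝ}
    {W₀ W : PiLp 2 fun _ : ι => E} {x : E} (hf : ∀ i, HasDerivAt (f i) (f' i) ⟪W i - W₀ i, x⟫) :
    HasGradientAt (fun V : PiLp 2 (fun _ : ι => E) => ∑ i, f i ⟪V i - W₀ i, x⟫)
      (WithLp.toLp 2 fun i => f' i • x) W := by
  let ℓ : ι → (PiLp 2 (fun _ : ι => E) →L[ℝ] ℝ) := fun i =>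
    (innerSL ℝ x).comp (PiLp.proj 2 (fun _ : ι => E) i)
  have hℓ : ∀ i, HasFDerivAt (fun V : PiLp 2 (fun _ : ι => E) => ⟪V i - W₀ i, x⟫) (ℓ i) W := by
    intro i
    have hfun : (fun V : PiLp 2 (fun _ : ι => E) => ⟪V i - W₀ i, x⟫)
        = fun V => ℓ i V - ⟪x, W₀ i⟫ := by
      funext V
      simp [ℓ, inner_sub_left, real_inner_comm]
    rw [hfun]
    exact (ℓ i).hasFDerivAt.sub_const _
  have hsum := HasFDerivAt.fun_sum (u := Finset.univ) fun i _ =>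
    (hf i).comp_hasFDerivAt W (hℓ i)
  rw [hasGradientAt_iff_hasFDerivAt]
  refine hsum.congr_fderiv ?_
  ext V
  simp [ℓ, PiLp.inner_apply, real_inner_smul_left]

end PiLp

lemma sqrt_sum_norm_sq_le_sqrt_card_mul {ι E : Type*} [Fintype ι] [SeminormedAddCommGroup E]
    {f : ι → E} {R : ℝ} (hf : ∀ i, ‖f i‖ ≤ R) :
    √(∑ i, ‖f i‖ ^ 2) ≤ √(Fintype.card ι) * R := by
  rcases isEmpty_or_nonempty ι with hι | ⟨⟨i⟩⟩
  · simp
  have hR : 0 ≤ R := (norm_nonneg _).trans (hf i)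
  calc √(∑ i, ‖f i‖ ^ 2) ≤ √(∑ _i : ι, R ^ 2) := by gcongr with i; exact hf i
    _ = √(Fintype.card ι) * R := by simp [Real.sqrt_mul, Real.sqrt_sq hR]

lemma abs_taylorEval_deriv_le {σ : ℝ → ℝ} {p : ℕ} {C₁ L : ℝ} (hσ : ContDiff ℝ (p + 1 : ℕ) σ)
    (hbd : ∀ t, |deriv σ t| ≤ C₁)
    (hlip : ∀ s t, |iteratedDeriv (p + 1) σ s - iteratedDeriv (p + 1) σ t| ≤ L * |s - t|)
    (u s : ℝ) :
    |taylorEval (deriv σ) p u s| ≤ C₁ + L * |s| ^ (p + 1) / (p + 1).factorial := by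
  have hσ' : ContDiff ℝ p (deriv σ) :=
    (by exact_mod_cast hσ : ContDiff ℝ ((p : WithTop ℕ∞) + 1) σ).deriv'
  have hT := abs_sub_taylorEval_le hσ' (by simpa [iteratedDeriv_succ'] using hlip) u s
  have := abs_sub_abs_le_abs_sub (taylorEval (deriv σ) p u s) (deriv σ (u + s))
  rw [abs_sub_comm] at this
  linarith [hbd (u + s)]

lemma hasGradientAt_netT (d m p : ℕ) (σ : ℝ → ℝ) (a : Fin m → ℝ) (W₀ W : Wts d m)
    (x : EuclideanSpace ℝ (Fin d)) :
    HasGradientAt (fun V => netT d m (p + 1) σ a W₀ V x)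
      (WithLp.toLp 2 fun r =>
        ((√m)⁻¹ * (a r * taylorEval (deriv σ) p ⟪W₀ r, x⟫ ⟪W r - W₀ r, x⟫)) • x) W := by
  have hfun : (fun V => netT d m (p + 1) σ a W₀ V x)
      = fun V : Wts d m =>
          ∑ r, (√m)⁻¹ * (a r * taylorEval σ (p + 1) ⟪W₀ r, x⟫ ⟪V r - W₀ r, x⟫) := by
    funext V
    simp only [netT, taylorEval, Finset.mul_sum]
  rw [hfun]
  exact hasGradientAt_sum_comp_inner_sub fun r =>
    ((hasDerivAt_taylorEval σ p _ _).const_mul (a r)).const_mul _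

lemma norm_JrowT_le {d m n p : ℕ} {σ : ℝ → ℝ} (hσ : ContDiff ℝ (p + 1 : ℕ) σ) {C₁ L C₀ : ℝ}
    (hbd : ∀ t, |deriv σ t| ≤ C₁)
    (hlip : ∀ s t, |iteratedDeriv (p + 1) σ s - iteratedDeriv (p + 1) σ t| ≤ L * |s - t|)
    {a : Fin m → ℝ} (ha : ∀ r, a r = 1 ∨ a r = -1) {W₀ W : Wts d m}
    {X : Fin n → EuclideanSpace ℝ (Fin d)} (hX : ∀ i, ‖X i‖ = 1) (hball : ‖W - W₀‖ ≤ C₀)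
    (i : Fin n) :
    ‖JrowT d m n (p + 1) σ a W₀ X W i‖ ≤ C₁ + L / (p + 1).factorial * C₀ ^ (p + 1) * (√m)⁻¹ := by
  set x := X i
  set s : EuclideanSpace ℝ (Fin m) := WithLp.toLp 2 fun r => ⟪W r - W₀ r, x⟫
  have hs : ‖s‖ ≤ C₀ := by
    refine (PiLp.norm_le_norm_of_norm_apply_le fun r => ?_).trans hball
    simpa [s, x, hX i] using abs_real_inner_le_norm (W r - W₀ r) (X i)
  have hC₁ : 0 ≤ C₁ := (abs_nonneg _).trans (hbd 0)
  have hL : 0 ≤ L := by simpa using (abs_nonneg _).trans (hlip 1 0)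
  set D : EuclideanSpace ℝ (Fin m) := (√m)⁻¹ • (WithLp.toLp 2 (fun _ => C₁)
    + (L / (p + 1).factorial) • WithLp.toLp 2 fun r => |s r| ^ (p + 1))
  have hD : ‖D‖ ≤ (√m)⁻¹ * (√m * C₁ + L / (p + 1).factorial * C₀ ^ (p + 1)) := by
    rw [norm_smul, Real.norm_of_nonneg (by positivity)]
    gcongr
    refine (norm_add_le _ _).trans ?_
    rw [norm_smul, Real.norm_of_nonneg (by positivity)]
    gcongr
    · simp [EuclideanSpace.norm_eq, Real.sqrt_sq hC₁]
    · exact (EuclideanSpace.norm_abs_pow_le s p).trans (by gcongr)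
  rw [JrowT, (hasGradientAt_netT d m p σ a W₀ W x).gradient, PiLp.norm_toLp_smul, hX i, mul_one]
  calc _ ≤ ‖D‖ := PiLp.norm_le_norm_of_norm_apply_le fun r => by
        have har : |a r| = 1 := by rcases ha r with h | h <;> simp [h]
        rw [Real.norm_eq_abs, Real.norm_eq_abs]
        refine le_trans ?_ (le_abs_self _)
        simp only [D, s, PiLp.smul_apply, PiLp.add_apply, smul_eq_mul, abs_mul, har, one_mul,
          abs_inv, abs_of_nonneg (Real.sqrt_nonneg _)]
        gcongr
        exact (abs_taylorEval_deriv_le hσ hbd hlip _ _).trans_eq (by ring)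
    _ ≤ (√m)⁻¹ * (√m * C₁ + L / (p + 1).factorial * C₀ ^ (p + 1)) := hD
    _ ≤ C₁ + L / (p + 1).factorial * C₀ ^ (p + 1) * (√m)⁻¹ := by
      rw [mul_add, ← mul_assoc, mul_comm _ (_ * _)]
      gcongr
      exact mul_le_of_le_one_left hC₁ inv_mul_le_one

theorem taylorized_jacobian_bounded_on_ball_general
    (d m n k : ℕ) (hk : 1 ≤ k) (σ : ℝ → ℝ) (hσ : ContDiff ℝ k σ)
    (C₁ : ℝ) (hbd : ∀ t : ℝ, |deriv σ t| ≤ C₁)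
    (L : ℝ) (hlip : ∀ s t : ℝ, |iteratedDeriv k σ s - iteratedDeriv k σ t| ≤ L * |s - t|)
    (a : Fin m → ℝ) (ha : ∀ r, a r = 1 ∨ a r = -1)
    (W₀ : Wts d m) (X : Fin n → EuclideanSpace ℝ (Fin d)) (hX : ∀ i, ‖X i‖ = 1)
    (C₀ : ℝ) (W : Wts d m) (hball : ‖W - W₀‖ ≤ C₀) :
    Real.sqrt (∑ i, ‖JrowT d m n k σ a W₀ X W i‖ ^ 2)
      ≤ C₁ * Real.sqrt n + L * Real.sqrt n / (k.factorial : ℝ) * C₀ ^ k * (Real.sqrt m)⁻¹ := by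
  obtain ⟨p, rfl⟩ : ∃ p, k = p + 1 := ⟨k - 1, by omega⟩
  calc √(∑ i, ‖JrowT d m n (p + 1) σ a W₀ X W i‖ ^ 2)
      ≤ √n * (C₁ + L / (p + 1).factorial * C₀ ^ (p + 1) * (√m)⁻¹) := by
        simpa using sqrt_sum_norm_sq_le_sqrt_card_mul (norm_JrowT_le hσ hbd hlip ha hX hball)
    _ = _ := by ring

/-- boundedness of the Taylorized Jacobian on a Frobenius ball (part of
Lemma A.2(a)). -/
theorem taylorized_jacobian_bounded_on_ball
    (d m n k : ℕ) (hm : 1 ≤ m) (hk : 1 ≤ k) (σ : ℝ → ℝ) (hσ : ContDiff ℝ k σ)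
    (C₁ : ℝ) (hbd : ∀ t : ℝ, |deriv σ t| ≤ C₁)
    (L : ℝ) (hlip : ∀ s t : ℝ, |iteratedDeriv k σ s - iteratedDeriv k σ t| ≤ L * |s - t|)
    (a : Fin m → ℝ) (ha : ∀ r, a r = 1 ∨ a r = -1)
    (W₀ : Wts d m) (X : Fin n → EuclideanSpace ℝ (Fin d)) (hX : ∀ i, ‖X i‖ = 1)
    (C₀ : ℝ) (hC₀ : 0 < C₀) (W : Wts d m) (hball : ‖W - W₀‖ ≤ C₀) :
    Real.sqrt (∑ i, ‖JrowT d m n k σ a W₀ X W i‖ ^ 2)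
      ≤ C₁ * Real.sqrt n + L * Real.sqrt n / (k.factorial : ℝ) * C₀ ^ k * (Real.sqrt m)⁻¹ :=
  taylorized_jacobian_bounded_on_ball_general d m n k hk σ hσ C₁ hbd L hlip a ha W₀ X hX C₀ W hball
end
end
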